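/- arXiv:2203.13899 — 3 statements merged into one kernel-verified Lean document; each statement's English description precedes it below -/
import Mathlib

section
/- Let M* be a finite set of edges with weights w : E → ℚ≥0 and k ≤ |M*|. Set t = w^k(M*)/(2k). If M is any set of edges with w_t(M) ≥ w_t(M*) (e.g., a maximum weight perfect matching under thresholded weights), then w^k(M) ≥ (1/2)·w^k(M*). (Case analysis: if at most k edges of M have positive thresholded weight then w^k(M) ≥ w_t(M) ≥ w_t(M*) ≥ w^k(M*) − k·t = (1/2)w^k(M*); otherwise M contains at least k edges of weight more than t, so w^k(M) ≥ k·t = (1/2)w^k(M*).) -/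
/-!
Since `k t = w^k(M*)/2` and cutting each weight down to its excess over `t` loses at most `t`
on each of the top `k` weights, `w_t(M) ≥ w_t(M*) ≥ w^k(M*)/2`. Either at most `k` weights of `M`
exceed `t`, and these carry all of `w_t(M)`, so `w^k(M) ≥ w_t(M)`; or `k` of them exceed `t`,
so `w^k(M) ≥ k t`.
-/

/-- The top-`k` weight of a multiset of rationals: the sum of its `k` largest elements. -/
def topkQ (S : Multiset ℚ) (k : ℕ) : ℚ :=
  ((S.sort (· ≤ ·)).reverse.take k).sum

namespace List

variable {α : Type*} [AddCommMonoid α] [PartialOrder α] [IsOrderedAddMonoid α]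

theorem sum_take_add_one_le {l : List α} {a : α} (hl : ∀ x ∈ l, x ≤ a) (ha : 0 ≤ a) (m : ℕ) :
    (l.take (m + 1)).sum ≤ (l.take m).sum + a := by
  rw [take_add_one, sum_append]
  gcongr
  cases h : l[m]? with
  | none => simpa using ha
  | some x => simpa using hl x (mem_of_getElem? h)

theorem Sublist.sum_le_sum_take {s l : List α} (h : s <+ l) (hl : l.Pairwise (· ≥ ·))
    (h0 : ∀ x ∈ l, 0 ≤ x) {m : ℕ} (hm : s.length ≤ m) : s.sum ≤ (l.take m).sum := by
  induction h generalizing m with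
  | slnil => simp
  | @cons s l a h ih =>
    rcases m with _ | m
    · simp [length_eq_zero_iff.mp (Nat.le_zero.mp hm)]
    · have hla : ∀ x ∈ l, x ≤ a := fun x hx => rel_of_pairwise_cons hl hx
      calc s.sum ≤ (l.take (m + 1)).sum :=
            ih hl.of_cons (fun x hx => h0 x (mem_cons_of_mem _ hx)) hm
        _ ≤ (l.take m).sum + a := sum_take_add_one_le hla (h0 a mem_cons_self) m
        _ = ((a :: l).take (m + 1)).sum := by rw [take_succ_cons, sum_cons, add_comm]
  | @cons_cons s l a h ih =>
    rcases m with _ | m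
    · simp at hm
    · rw [take_succ_cons, sum_cons, sum_cons]
      gcongr
      exact ih hl.of_cons (fun x hx => h0 x (mem_cons_of_mem _ hx)) (by simpa using hm)

end List

def topk (S : Multiset ℚ) (k : ℕ) : Multiset ℚ :=
  ((S.sort (· ≤ ·)).reverse.take k : List ℚ)

theorem topkQ_eq_sum_topk (S : Multiset ℚ) (k : ℕ) : topkQ S k = (topk S k).sum := rfl

theorem coe_reverse_sort {α : Type*} [LinearOrder α] (S : Multiset α) :
    (((S.sort (· ≤ ·)).reverse : List α) : Multiset α) = S := by
  rw [Multiset.coe_reverse, Multiset.sort_eq]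

theorem pairwise_reverse_sort {α : Type*} [LinearOrder α] (S : Multiset α) :
    (S.sort (· ≤ ·)).reverse.Pairwise (· ≥ ·) :=
  List.pairwise_reverse.mpr (Multiset.pairwise_sort S (· ≤ ·))

theorem topk_le (S : Multiset ℚ) (k : ℕ) : topk S k ≤ S := by
  conv_rhs => rw [← coe_reverse_sort S]
  exact Multiset.coe_le.mpr (List.take_sublist _ _).subperm

theorem card_topk (S : Multiset ℚ) (k : ℕ) :
    Multiset.card (topk S k) = min k (Multiset.card S) := by
  simp [topk]

theorem sum_le_topkQ {S T : Multiset ℚ} (h0 : ∀ x ∈ S, 0 ≤ x) (hT : T ≤ S) {k : ℕ}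
    (hk : Multiset.card T ≤ k) : T.sum ≤ topkQ S k := by
  have hsub : List.Sublist (T.sort (· ≤ ·)).reverse (S.sort (· ≤ ·)).reverse := by
    refine List.sublist_of_subperm_of_pairwise ?_
      (pairwise_reverse_sort T) (pairwise_reverse_sort S)
    rw [← Multiset.coe_le, coe_reverse_sort, coe_reverse_sort]
    exact hT
  calc T.sum = (T.sort (· ≤ ·)).reverse.sum := by rw [← Multiset.sum_coe, coe_reverse_sort]
    _ ≤ topkQ S k := hsub.sum_le_sum_take (pairwise_reverse_sort S)
      (fun x hx => h0 x (by simpa using hx)) (by simpa using hk)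

theorem topkQ_nonneg {S : Multiset ℚ} (h0 : ∀ x ∈ S, 0 ≤ x) (k : ℕ) : 0 ≤ topkQ S k := by
  simpa using sum_le_topkQ h0 (Multiset.zero_le S) (k := k) (by simp)

/-- The thresholded weight `w_t` of the paper, as a function of the multiset of weights. -/
def threshSum (t : ℚ) (S : Multiset ℚ) : ℚ :=
  (S.map fun x => max (x - t) 0).sum

theorem threshSum_add (t : ℚ) (S T : Multiset ℚ) :
    threshSum t (S + T) = threshSum t S + threshSum t T := by
  simp [threshSum]

theorem threshSum_eq_zero {t : ℚ} {S : Multiset ℚ} (h : ∀ x ∈ S, x ≤ t) : threshSum t S = 0 :=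
  Multiset.sum_eq_zero fun y hy => by
    obtain ⟨x, hx, rfl⟩ := Multiset.mem_map.mp hy
    exact max_eq_right (sub_nonpos.mpr (h x hx))

theorem threshSum_le_sum {t : ℚ} {S : Multiset ℚ} (h0 : ∀ x ∈ S, 0 ≤ x) (ht : 0 ≤ t) :
    threshSum t S ≤ S.sum := by
  simpa [threshSum] using Multiset.sum_map_le_sum_map _ id fun x hx =>
    max_le (by simp [ht]) (h0 x hx)

theorem sum_le_threshSum_add {t : ℚ} {S T : Multiset ℚ} (hT : T ≤ S) :
    T.sum ≤ threshSum t S + Multiset.card T * t := by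
  have hS : threshSum t T ≤ threshSum t S := by
    obtain ⟨U, rfl⟩ := Multiset.le_iff_exists_add.mp hT
    rw [threshSum_add]
    have : 0 ≤ threshSum t U := Multiset.sum_nonneg fun y hy => by
      obtain ⟨x, -, rfl⟩ := Multiset.mem_map.mp hy
      exact le_max_right _ _
    linarith
  calc T.sum = (T.map fun x => (x - t) + t).sum := by simp
    _ ≤ (T.map fun x => max (x - t) 0 + t).sum :=
      Multiset.sum_map_le_sum_map _ _ fun x _ => by gcongr; exact le_max_left _ _
    _ = threshSum t T + Multiset.card T * t := by simp [threshSum, Multiset.sum_map_add]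
    _ ≤ threshSum t S + Multiset.card T * t := by gcongr

theorem topkQ_le_threshSum_add (t : ℚ) {S : Multiset ℚ} {k : ℕ} (hk : k ≤ Multiset.card S) :
    topkQ S k ≤ threshSum t S + k * t := by
  simpa [topkQ_eq_sum_topk, card_topk, hk] using sum_le_threshSum_add (t := t) (topk_le S k)

theorem min_mul_threshSum_le_topkQ {t : ℚ} {S : Multiset ℚ} (h0 : ∀ x ∈ S, 0 ≤ x) (ht : 0 ≤ t)
    (k : ℕ) : min (k * t) (threshSum t S) ≤ topkQ S k := by
  set P := S.filter fun x => t < x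
  have hP : P ≤ S := Multiset.filter_le _ S
  by_cases hc : Multiset.card P ≤ k
  · have hsplit : threshSum t S = threshSum t P := by
      have hsmall : ∀ x ∈ S.filter fun x => ¬ t < x, x ≤ t := fun x hx =>
        not_lt.mp (Multiset.mem_filter.mp hx).2
      rw [← Multiset.filter_add_not (fun x => t < x) S, threshSum_add, threshSum_eq_zero hsmall,
        add_zero]
    calc min (k * t) (threshSum t S) ≤ threshSum t P := hsplit ▸ min_le_right _ _
      _ ≤ P.sum := threshSum_le_sum (fun x hx => h0 x (Multiset.mem_of_le hP hx)) ht
      _ ≤ topkQ S k := sum_le_topkQ h0 hP hc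
  · have hcard : Multiset.card (topk P k) = k := by rw [card_topk]; omega
    have hbig : ∀ x ∈ topk P k, t ≤ x := fun x hx =>
      (Multiset.of_mem_filter (Multiset.mem_of_le (topk_le P k) hx)).le
    calc min (k * t) (threshSum t S) ≤ k * t := min_le_left _ _
      _ ≤ (topk P k).sum := by simpa [hcard] using Multiset.card_nsmul_le_sum hbig
      _ ≤ topkQ S k := sum_le_topkQ h0 ((topk_le P k).trans hP) hcard.le

theorem stmt_4_general {E : Type*} (w : E → ℚ) (hw : ∀ e, 0 ≤ w e)
    (Mstar M : Finset E) (k : ℕ) (hk : k ≤ Mstar.card)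
    (t : ℚ) (ht : t = topkQ (Mstar.val.map w) k / (2 * k))
    (hM : ∑ e ∈ Mstar, max (w e - t) 0 ≤ ∑ e ∈ M, max (w e - t) 0) :
    (1 / 2) * topkQ (Mstar.val.map w) k ≤ topkQ (M.val.map w) k := by
  rcases Nat.eq_zero_or_pos k with rfl | hk0
  · simp [topkQ]
  have hnonneg (N : Finset E) : ∀ x ∈ N.val.map w, 0 ≤ x := by
    simp only [Multiset.mem_map]
    rintro _ ⟨e, -, rfl⟩
    exact hw e
  have hthresh (N : Finset E) : threshSum t (N.val.map w) = ∑ e ∈ N, max (w e - t) 0 := by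
    rw [threshSum, Multiset.map_map, Finset.sum_map_val]; rfl
  set A := topkQ (Mstar.val.map w) k
  have hkt : k * t = A / 2 := by rw [ht]; field_simp
  have hA : A ≤ threshSum t (Mstar.val.map w) + k * t :=
    topkQ_le_threshSum_add t (by simpa using hk)
  have ht0 : 0 ≤ t := by
    rw [ht]; exact div_nonneg (topkQ_nonneg (hnonneg Mstar) k) (by positivity)
  have hmin := min_mul_threshSum_le_topkQ (hnonneg M) ht0 k
  rw [hthresh] at hA hmin
  rw [min_eq_left (by linarith)] at hmin
  linarith

/-- Lemma `goodthreshold`: with threshold `t = w^k(M*)/(2k)`, any edge set whose total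
thresholded weight is at least that of `M*` has top-`k` weight at least half that of `M*`. -/
theorem stmt_4 {E : Type*} [DecidableEq E] (w : E → ℚ) (hw : ∀ e, 0 ≤ w e)
    (Mstar M : Finset E) (k : ℕ) (hk : k ≤ Mstar.card)
    (t : ℚ) (ht : t = topkQ (Mstar.val.map w) k / (2 * k))
    (hM : ∑ e ∈ Mstar, max (w e - t) 0 ≤ ∑ e ∈ M, max (w e - t) 0) :
    (1 / 2) * topkQ (Mstar.val.map w) k ≤ topkQ (M.val.map w) k :=
  stmt_4_general w hw Mstar M k hk t ht hM
end

section
/- Let M be a perfect matching in a graph G with independence number α and edges colored red/blue, and let 𝒞 be a set of vertex-disjoint M-alternating cycles whose set R of red edges has size k. Then G contains a set 𝒞′ of vertex-disjoint M-alternating cycles such that R ⊆ E(𝒞′), |E(𝒞′)| ≤ k·4^{α+1}, and every edge of E(𝒞′) \ E(𝒞) is a non-matching edge. -/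
/-- The `i`-th edge of the cycle given by the vertex list `c` (indices taken cyclically). -/
def cEdge {V : Type*} [Inhabited V] (c : List V) (i : ℕ) : Sym2 V :=
  s(c.getD i default, c.getD ((i + 1) % c.length) default)

/-- The edge set of the cycle given by the vertex list `c`. -/
def cEdges {V : Type*} [Inhabited V] [DecidableEq V] (c : List V) : Finset (Sym2 V) :=
  ((List.range c.length).map (cEdge c)).toFinset

/-- `c` is (a normalized representation of) an `M`-alternating cycle in `G`:
a list of distinct vertices, of even length at least 4, whose consecutive (cyclic)
edges are edges of `G` and belong to `M` exactly at even positions. -/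
def AltCycle {V : Type*} [Inhabited V] (G : SimpleGraph V) (M : Set (Sym2 V))
    (c : List V) : Prop :=
  c.Nodup ∧ 4 ≤ c.length ∧ c.length % 2 = 0 ∧
    ∀ i < c.length, cEdge c i ∈ G.edgeSet ∧ (cEdge c i ∈ M ↔ i % 2 = 0)

/-- The edges of a set of cycles. -/
def Ecyc {V : Type*} [Inhabited V] [DecidableEq V] (𝒞 : Finset (List V)) :
    Finset (Sym2 V) :=
  𝒞.biUnion cEdges

/-!
Each cycle `c ∈ 𝒞` is treated on its own, with `F` the red edges on it. Starting from `{c}`,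
repeatedly replace a cycle `D` of the family by a shorter `M`-alternating cycle on vertices of
`D` that keeps the edges of `F` on `D` and has no matching edges outside `D`, or drop `D` if it
carries no edge of `F`.

When this stops, every `D` carries `ρ ≥ 1` edges of `F` and has at most `2(ρ + 1)ℓ ≤ 4ρℓ`
vertices, where `ℓ = arcLength (α - 1)` and `4ℓ ≤ 4 ^ (α + 1)`. Otherwise, by pigeonhole, `D`
contains an arc of `ℓ` consecutive matching edges avoiding `F`. A chord from one matching edge
of the arc to a later, non-consecutive one lets the cycle skip the edges in between; two chords
around a segment let it skip edges by running through the segment backwards. Either way `D`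
gets shorter. If the arc has no such chords, a greedy recursion (split the arc at the first
matching edge joined to the last one and recurse into a long enough side, adding an end vertex)
yields `α + 1` independent vertices, which is impossible.
-/

namespace CycleShortening

section Lists

variable {α : Type*}

lemma getElem_append_take_one (l : List α) (i : ℕ) (h : i < (l ++ l.take 1).length) :
    (l ++ l.take 1)[i] = l[i % l.length]'(Nat.mod_lt _ (by simp at h; omega)) := by
  rcases lt_or_ge i l.length with hi | hi
  · simp [List.getElem_append_left hi, Nat.mod_eq_of_lt hi]
  · have : i = l.length := by simp at h; omega
    subst this
    simp [List.getElem_append_right]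

lemma isChain_append_take_one_iff {R : α → α → Prop} {l : List α} :
    (l ++ l.take 1).IsChain R ↔
      ∀ i (h : i < l.length), R l[i] (l[(i + 1) % l.length]'(Nat.mod_lt _ (by omega))) := by
  rw [List.isChain_iff_getElem]
  constructor
  · intro h i hi
    have := h i (by simp; omega)
    simpa only [getElem_append_take_one, Nat.mod_eq_of_lt hi] using this
  · intro h i hi
    have hn : i < l.length := by simp at hi; omega
    simpa only [getElem_append_take_one, Nat.mod_eq_of_lt hn] using h i hn

lemma isChain_append_append_take_one {R : α → α → Prop} {l₁ l₂ : List α} (h₁ : l₁ ≠ [])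
    (h₂ : l₂ ≠ []) :
    (l₁ ++ l₂ ++ (l₁ ++ l₂).take 1).IsChain R ↔ l₁.IsChain R ∧ l₂.IsChain R ∧
      R (l₁.getLast h₁) (l₂.head h₂) ∧ R (l₂.getLast h₂) (l₁.head h₁) := by
  obtain ⟨a, l, rfl⟩ := List.exists_cons_of_ne_nil h₁
  rw [List.cons_append, List.take_succ_cons, List.take_zero, ← List.cons_append,
    List.append_assoc, List.isChain_append, List.isChain_append]
  simp [List.getLast?_eq_some_getLast h₂, List.head?_eq_some_head h₂,
    List.getLast?_eq_some_getLast h₁]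
  tauto

lemma isChain_append_append_take_one_comm {R : α → α → Prop} (l₁ l₂ : List α) :
    (l₁ ++ l₂ ++ (l₁ ++ l₂).take 1).IsChain R ↔ (l₂ ++ l₁ ++ (l₂ ++ l₁).take 1).IsChain R := by
  rcases eq_or_ne l₁ [] with rfl | h₁
  · simp
  rcases eq_or_ne l₂ [] with rfl | h₂
  · simp
  rw [isChain_append_append_take_one h₁ h₂, isChain_append_append_take_one h₂ h₁]
  tauto

lemma exists_eq_pair_append_append_pair {l : List α} (h : 4 ≤ l.length) :
    ∃ x w m u y, l = [x, w] ++ m ++ [u, y] := by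
  match l, h with
  | x :: w :: l, h =>
    obtain ⟨u, y, huy⟩ := List.length_eq_two.1
      (show (l.drop (l.length - 2)).length = 2 by simp at h ⊢; omega)
    exact ⟨x, w, l.take (l.length - 2), u, y, by simp [← huy]⟩

lemma exists_split_at_first (P : α → Prop) (l : List α) :
    ∃ l₁ l₂, l = l₁ ++ l₂ ∧ (∀ a ∈ l₁, ¬P a) ∧ ∀ a ∈ l₂.head?, P a := by
  classical
  refine ⟨l.takeWhile (fun a ↦ !decide (P a)), l.dropWhile (fun a ↦ !decide (P a)),
    List.takeWhile_append_dropWhile.symm, fun a ha ↦ ?_, fun a ha ↦ ?_⟩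
  · simpa using List.mem_takeWhile_imp ha
  · have := List.head?_dropWhile_not (fun a ↦ !decide (P a)) l
    rw [Option.mem_def.1 ha] at this
    simpa using this

end Lists

lemma sum_insert_erase_lt {ι : Type*} [DecidableEq ι] {s : Finset ι} {f : ι → ℕ} {a b : ι}
    (ha : a ∈ s) (hb : f b < f a) : ∑ i ∈ insert b (s.erase a), f i < ∑ i ∈ s, f i := by
  rw [← Finset.add_sum_erase s f ha]
  by_cases hbs : b ∈ s.erase a
  · rw [Finset.insert_eq_of_mem hbs]
    omega
  · rw [Finset.sum_insert hbs]
    omega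

section PathEdges

variable {V : Type*}

def pathEdges : List V → List (Sym2 V)
  | a :: b :: l => s(a, b) :: pathEdges (b :: l)
  | _ => []

@[simp] lemma pathEdges_nil : pathEdges ([] : List V) = [] := rfl

@[simp] lemma pathEdges_singleton (a : V) : pathEdges [a] = [] := rfl

@[simp] lemma pathEdges_cons_cons (a b : V) (l : List V) :
    pathEdges (a :: b :: l) = s(a, b) :: pathEdges (b :: l) := rfl

lemma mem_pathEdges {l : List V} {e : Sym2 V} :
    e ∈ pathEdges l ↔ ∃ u v, e = s(u, v) ∧ [u, v] <:+: l := by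
  induction l with
  | nil => simp
  | cons a l ih =>
    cases l with
    | nil => simp [List.infix_cons_iff, List.prefix_cons_iff]
    | cons b l =>
      rw [pathEdges_cons_cons, List.mem_cons, ih]
      simp only [List.infix_cons_iff (l₂ := b :: l), List.prefix_cons_iff, List.cons.injEq]
      grind

lemma pathEdges_subset_of_infix {l₁ l₂ : List V} (h : l₁ <:+: l₂) :
    pathEdges l₁ ⊆ pathEdges l₂ := fun _ he ↦ by
  obtain ⟨u, v, rfl, huv⟩ := mem_pathEdges.1 he
  exact mem_pathEdges.2 ⟨u, v, rfl, huv.trans h⟩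

lemma mem_of_mem_pathEdges {l : List V} {e : Sym2 V} (he : e ∈ pathEdges l) {v : V}
    (hv : v ∈ e) : v ∈ l := by
  obtain ⟨u, w, rfl, huw⟩ := mem_pathEdges.1 he
  rcases Sym2.mem_iff.1 hv with rfl | rfl <;> exact huw.subset (by simp)

lemma length_pathEdges (l : List V) : (pathEdges l).length = l.length - 1 := by
  induction l with
  | nil => rfl
  | cons a l ih => cases l with
    | nil => rfl
    | cons b l => simp [ih]

lemma getElem_pathEdges (l : List V) (i : ℕ) (h : i < (pathEdges l).length) :
    (pathEdges l)[i] =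
      s(l[i]'(by rw [length_pathEdges] at h; omega),
        l[i + 1]'(by rw [length_pathEdges] at h; omega)) := by
  induction l generalizing i with
  | nil => simp at h
  | cons a l ih => cases l with
    | nil => simp at h
    | cons b l => cases i with
      | zero => rfl
      | succ i => simp [ih]

lemma pathEdges_append {l₁ l₂ : List V} (h₁ : l₁ ≠ []) (h₂ : l₂ ≠ []) :
    pathEdges (l₁ ++ l₂) = pathEdges l₁ ++ s(l₁.getLast h₁, l₂.head h₂) :: pathEdges l₂ := by
  induction l₁ with
  | nil => contradiction
  | cons a l ih =>
    cases l with
    | nil => obtain ⟨b, l₂, rfl⟩ := List.exists_cons_of_ne_nil h₂; rfl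
    | cons b l =>
      have := ih (List.cons_ne_nil b l)
      simp only [List.cons_append] at this ⊢
      rw [pathEdges_cons_cons, this]
      simp

lemma pathEdges_append_append_take_one {l₁ l₂ : List V} (h₁ : l₁ ≠ []) (h₂ : l₂ ≠ []) :
    pathEdges (l₁ ++ l₂ ++ (l₁ ++ l₂).take 1) =
      pathEdges l₁ ++ s(l₁.getLast h₁, l₂.head h₂) ::
        (pathEdges l₂ ++ [s(l₂.getLast h₂, l₁.head h₁)]) := by
  obtain ⟨a, l, rfl⟩ := List.exists_cons_of_ne_nil h₁
  rw [List.cons_append, List.take_succ_cons, List.take_zero, ← List.cons_append,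
    List.append_assoc, pathEdges_append h₁ (by simp), List.head_append_of_ne_nil h₂,
    pathEdges_append h₂ (List.cons_ne_nil _ _)]
  simp

variable [Inhabited V]

lemma range_map_cEdge (c : List V) :
    (List.range c.length).map (cEdge c) = pathEdges (c ++ c.take 1) := by
  apply List.ext_getElem
  · rcases c with _ | ⟨a, c⟩ <;> simp [length_pathEdges]
  · intro i h₁ h₂
    have hi : i < c.length := by simpa using h₁
    simp only [List.getElem_map, List.getElem_range, getElem_pathEdges, getElem_append_take_one,
      cEdge, Nat.mod_eq_of_lt hi, List.getD_eq_getElem _ _ hi,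
      List.getD_eq_getElem _ _ (Nat.mod_lt _ (Nat.zero_lt_of_lt hi))]

variable [DecidableEq V]

lemma cEdges_eq (c : List V) : cEdges c = (pathEdges (c ++ c.take 1)).toFinset := by
  rw [cEdges, range_map_cEdge]

lemma card_cEdges_le (c : List V) : (cEdges c).card ≤ c.length :=
  (List.toFinset_card_le _).trans (by simp)

lemma mem_of_mem_cEdges {c : List V} {e : Sym2 V} (he : e ∈ cEdges c) {v : V} (hv : v ∈ e) :
    v ∈ c := by
  rw [cEdges_eq, List.mem_toFinset] at he
  have := mem_of_mem_pathEdges he hv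
  rw [List.mem_append] at this
  exact this.elim id fun h ↦ List.take_subset _ _ h

lemma disjoint_cEdges {c d : List V} (h : ∀ v, v ∈ c → v ∉ d) :
    Disjoint (cEdges c) (cEdges d) := by
  refine Finset.disjoint_left.2 fun e hc hd ↦ ?_
  induction e using Sym2.ind with
  | _ u w =>
    exact h u (mem_of_mem_cEdges hc (Sym2.mem_mk_left u w))
      (mem_of_mem_cEdges hd (Sym2.mem_mk_left u w))

lemma cEdges_append_comm (l₁ l₂ : List V) : cEdges (l₁ ++ l₂) = cEdges (l₂ ++ l₁) := by
  rcases eq_or_ne l₁ [] with rfl | h₁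
  · simp
  rcases eq_or_ne l₂ [] with rfl | h₂
  · simp
  ext e
  simp only [cEdges_eq, List.mem_toFinset, pathEdges_append_append_take_one h₁ h₂,
    pathEdges_append_append_take_one h₂ h₁, List.mem_append, List.mem_cons]
  tauto

lemma cEdges_append_subset {a a' y : List V} (ha : a ≠ []) (ha' : a' ≠ []) (hy : y ≠ [])
    (hhead : a'.head ha' = a.head ha) (hlast : a'.getLast ha' = a.getLast ha) :
    cEdges (a ++ y) ⊆ cEdges (a' ++ y) ∪ (pathEdges a).toFinset := by
  intro e
  simp only [cEdges_eq, Finset.mem_union, List.mem_toFinset, List.mem_append, List.mem_cons,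
    pathEdges_append_append_take_one ha hy, pathEdges_append_append_take_one ha' hy, hhead, hlast]
  tauto

end PathEdges

section PairLists

variable {V : Type*}

/-- An alternating cycle is handled as the list of its matching edges `(a, b)`, oriented along the
cycle; `verts` recovers its vertex list. -/
def verts (P : List (V × V)) : List V := P.flatMap fun p ↦ [p.1, p.2]

@[simp] lemma verts_nil : verts ([] : List (V × V)) = [] := rfl

@[simp] lemma verts_cons (p : V × V) (P : List (V × V)) :
    verts (p :: P) = p.1 :: p.2 :: verts P := rfl

@[simp] lemma verts_append (P Q : List (V × V)) : verts (P ++ Q) = verts P ++ verts Q :=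
  List.flatMap_append

@[simp] lemma length_verts (P : List (V × V)) : (verts P).length = 2 * P.length := by
  induction P with
  | nil => rfl
  | cons p P ih => simp [ih]; ring

lemma verts_reverse_map_swap (P : List (V × V)) :
    verts (P.map Prod.swap).reverse = (verts P).reverse := by
  induction P with
  | nil => rfl
  | cons p P ih => simp [ih]

lemma mem_verts {P : List (V × V)} {v : V} : v ∈ verts P ↔ ∃ p ∈ P, v ∈ s(p.1, p.2) := by
  simp [verts, Sym2.mem_iff]

lemma fst_mem_verts {P : List (V × V)} {p : V × V} (hp : p ∈ P) : p.1 ∈ verts P :=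
  mem_verts.2 ⟨p, hp, Sym2.mem_mk_left _ _⟩

lemma snd_mem_verts {P : List (V × V)} {p : V × V} (hp : p ∈ P) : p.2 ∈ verts P :=
  mem_verts.2 ⟨p, hp, Sym2.mem_mk_right _ _⟩

lemma verts_sublist_verts {P Q : List (V × V)} (h : P.Sublist Q) : (verts P).Sublist (verts Q) :=
  h.flatMap _

lemma disjoint_verts_of_append_sublist {P T U : List (V × V)} (hnd : (verts P).Nodup)
    (h : (T ++ U).Sublist P) : (verts T).Disjoint (verts U) := by
  have := hnd.sublist (verts_sublist_verts h)
  rw [verts_append] at this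
  exact List.disjoint_of_nodup_append this

lemma verts_ne_nil {P : List (V × V)} (hP : P ≠ []) : verts P ≠ [] := by
  simpa [← List.length_pos_iff] using hP

lemma head_verts {P : List (V × V)} (hP : P ≠ []) :
    (verts P).head (verts_ne_nil hP) = (P.head hP).1 := by
  obtain ⟨p, P, rfl⟩ := List.exists_cons_of_ne_nil hP
  rfl

lemma getLast_verts {P : List (V × V)} (hP : P ≠ []) :
    (verts P).getLast (verts_ne_nil hP) = (P.getLast hP).2 := by
  induction P with
  | nil => contradiction
  | cons p P ih =>
    cases P with
    | nil => rfl
    | cons q P => simpa [List.getLast_cons] using ih (List.cons_ne_nil _ _)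

lemma getElem_verts_two_mul (P : List (V × V)) (j : ℕ) (hj : j < P.length) :
    (verts P)[2 * j]'(by simp; omega) = P[j].1 := by
  induction P generalizing j with
  | nil => simp at hj
  | cons p P ih => cases j with
    | zero => rfl
    | succ j => simpa [Nat.mul_succ] using ih j (by simpa using hj)

lemma getElem_verts_two_mul_add_one (P : List (V × V)) (j : ℕ) (hj : j < P.length) :
    (verts P)[2 * j + 1]'(by simp; omega) = P[j].2 := by
  induction P generalizing j with
  | nil => simp at hj
  | cons p P ih => cases j with
    | zero => rfl
    | succ j => simpa [Nat.mul_succ] using ih j (by simpa using hj)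

lemma exists_verts_eq {c : List V} (h : Even c.length) : ∃ P, verts P = c := by
  obtain ⟨k, hk⟩ := h
  induction k generalizing c with
  | zero => exact ⟨[], (List.length_eq_zero_iff.1 hk).symm⟩
  | succ k ih =>
    match c, hk with
    | [_], hk => simp at hk; omega
    | a :: b :: c, hk =>
      obtain ⟨P, rfl⟩ := ih (c := c) (by simp at hk; omega)
      exact ⟨(a, b) :: P, rfl⟩

def Link (G : SimpleGraph V) (M : Set (Sym2 V)) (p q : V × V) : Prop :=
  s(p.2, q.1) ∈ G.edgeSet ∧ s(p.2, q.1) ∉ M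

lemma Link.swap {G : SimpleGraph V} {M : Set (Sym2 V)} {p q : V × V} (h : Link G M p q) :
    Link G M q.swap p.swap := by
  simpa [Link, Sym2.eq_swap] using h

end PairLists

section AlternatingCycles

variable {V : Type*} [Inhabited V] {G : SimpleGraph V} {M : Set (Sym2 V)}

lemma cEdge_verts_two_mul (P : List (V × V)) (j : ℕ) (hj : j < P.length) :
    cEdge (verts P) (2 * j) = s(P[j].1, P[j].2) := by
  have h : (2 * j + 1) % (verts P).length = 2 * j + 1 := Nat.mod_eq_of_lt (by simp; omega)
  rw [cEdge, h, List.getD_eq_getElem _ _ (by simp; omega),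
    List.getD_eq_getElem _ _ (by simp; omega), getElem_verts_two_mul _ _ hj,
    getElem_verts_two_mul_add_one _ _ hj]

lemma cEdge_verts_two_mul_add_one (P : List (V × V)) (j : ℕ) (hj : j < P.length) :
    cEdge (verts P) (2 * j + 1) =
      s(P[j].2, (P[(j + 1) % P.length]'(Nat.mod_lt _ (by omega))).1) := by
  have h : (2 * j + 1 + 1) % (verts P).length = 2 * ((j + 1) % P.length) := by
    rw [length_verts, show 2 * j + 1 + 1 = 2 * (j + 1) by ring, Nat.mul_mod_mul_left]
  rw [cEdge, h, List.getD_eq_getElem _ _ (by simp; omega),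
    List.getD_eq_getElem _ _ (by simp [Nat.mod_lt _ (show 0 < P.length by omega)]),
    getElem_verts_two_mul_add_one _ _ hj, getElem_verts_two_mul]

lemma forall_cEdge_verts_iff {P : List (V × V)} :
    (∀ i < (verts P).length,
        cEdge (verts P) i ∈ G.edgeSet ∧ (cEdge (verts P) i ∈ M ↔ i % 2 = 0)) ↔
      (∀ p ∈ P, s(p.1, p.2) ∈ G.edgeSet ∧ s(p.1, p.2) ∈ M) ∧
        ∀ j (hj : j < P.length),
          Link G M P[j] (P[(j + 1) % P.length]'(Nat.mod_lt _ (by omega))) := by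
  rw [length_verts]
  constructor
  · intro h
    refine ⟨fun p hp ↦ ?_, fun j hj ↦ ?_⟩
    · obtain ⟨j, hj, rfl⟩ := List.mem_iff_getElem.1 hp
      have := h (2 * j) (by omega)
      rw [cEdge_verts_two_mul P j hj] at this
      exact ⟨this.1, this.2.2 (by omega)⟩
    · have := h (2 * j + 1) (by omega)
      rw [cEdge_verts_two_mul_add_one P j hj] at this
      exact ⟨this.1, fun hM ↦ absurd (this.2.1 hM) (by omega)⟩
  · rintro ⟨hpair, hlink⟩ i hi
    obtain ⟨j, rfl | rfl⟩ := Nat.even_or_odd' i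
    · rw [cEdge_verts_two_mul P j (by omega)]
      have := hpair _ (List.getElem_mem (show j < P.length by omega))
      exact ⟨this.1, iff_of_true this.2 (by omega)⟩
    · rw [cEdge_verts_two_mul_add_one P j (by omega)]
      have := hlink j (by omega)
      exact ⟨this.1, iff_of_false this.2 (by omega)⟩

lemma altCycle_verts_iff {P : List (V × V)} :
    AltCycle G M (verts P) ↔ (verts P).Nodup ∧ 2 ≤ P.length ∧
      (∀ p ∈ P, s(p.1, p.2) ∈ G.edgeSet ∧ s(p.1, p.2) ∈ M) ∧
        (P ++ P.take 1).IsChain (Link G M) := by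
  rw [AltCycle, forall_cEdge_verts_iff, isChain_append_take_one_iff, length_verts]
  constructor
  · rintro ⟨hnd, hlen, -, hedges⟩
    exact ⟨hnd, by omega, hedges⟩
  · rintro ⟨hnd, hlen, hedges⟩
    exact ⟨hnd, by omega, by omega, hedges⟩

lemma altCycle_verts_append_comm {P Q : List (V × V)} :
    AltCycle G M (verts (P ++ Q)) ↔ AltCycle G M (verts (Q ++ P)) := by
  rw [altCycle_verts_iff, altCycle_verts_iff, verts_append, verts_append,
    List.nodup_append_comm, List.length_append, List.length_append, Nat.add_comm P.length,
    isChain_append_append_take_one_comm P Q]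
  simp only [List.mem_append, or_comm]

lemma mem_cEdges_verts [DecidableEq V] {P : List (V × V)} {p : V × V} (hp : p ∈ P) :
    s(p.1, p.2) ∈ cEdges (verts P) := by
  obtain ⟨j, hj, rfl⟩ := List.mem_iff_getElem.1 hp
  rw [cEdges, List.mem_toFinset, List.mem_map]
  exact ⟨2 * j, List.mem_range.2 (by simp; omega), cEdge_verts_two_mul P j hj⟩

lemma exists_mem_eq_of_mem_cEdges_verts [DecidableEq V] {P : List (V × V)}
    (hc : AltCycle G M (verts P)) {e : Sym2 V} (he : e ∈ cEdges (verts P)) (heM : e ∈ M) :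
    ∃ p ∈ P, e = s(p.1, p.2) := by
  rw [cEdges, List.mem_toFinset, List.mem_map] at he
  obtain ⟨i, hi, rfl⟩ := he
  rw [List.mem_range] at hi
  obtain ⟨j, rfl⟩ : ∃ j, i = 2 * j := ⟨i / 2, by have := (hc.2.2.2 i hi).2.1 heM; omega⟩
  rw [length_verts] at hi
  exact ⟨_, List.getElem_mem (show j < P.length by omega), cEdge_verts_two_mul P j (by omega)⟩

lemma chord_not_mem (hM : ∀ v : V, ∃! e, e ∈ M ∧ v ∈ e) {P₁ P₂ : List (V × V)}
    (hc : AltCycle G M (verts (P₁ ++ P₂))) {u v : V} (hu : u ∈ verts P₁) (hv : v ∈ verts P₂) :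
    s(u, v) ∉ M := by
  intro huv
  obtain ⟨hnd, -, hpairs, -⟩ := altCycle_verts_iff.1 hc
  obtain ⟨p, hp, hup⟩ := mem_verts.1 hu
  have : s(u, v) = s(p.1, p.2) :=
    (hM u).unique ⟨huv, Sym2.mem_mk_left _ _⟩ ⟨(hpairs p (List.mem_append_left _ hp)).2, hup⟩
  rw [verts_append] at hnd
  exact List.disjoint_of_nodup_append hnd (mem_verts.2 ⟨p, hp, this ▸ Sym2.mem_mk_right u v⟩)
    hv

end AlternatingCycles

section Shortcuts

variable {V : Type*} {G : SimpleGraph V} {M : Set (Sym2 V)}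

/-- `A'` can replace the arc `A` of an alternating cycle `A ++ Y`, making it shorter. -/
structure IsShortcut (G : SimpleGraph V) (M : Set (Sym2 V)) (A A' : List (V × V)) : Prop where
  head?_eq : A'.head? = A.head?
  getLast?_eq : A'.getLast? = A.getLast?
  length_lt : A'.length < A.length
  isChain : A'.IsChain (Link G M)
  mem_or_swap_mem : ∀ p ∈ A', p ∈ A ∨ p.swap ∈ A
  subperm : (verts A').Subperm (verts A)

lemma isShortcut_skip {L₁ K L₂ : List (V × V)} {p q : V × V}
    (hA : (L₁ ++ p :: K ++ q :: L₂).IsChain (Link G M)) (hK : K ≠ []) (hpq : Link G M p q) :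
    IsShortcut G M (L₁ ++ p :: K ++ q :: L₂) (L₁ ++ p :: q :: L₂) where
  head?_eq := by simp [List.head?_append]
  getLast?_eq := by
    rw [show L₁ ++ p :: q :: L₂ = L₁ ++ [p] ++ q :: L₂ by simp,
      List.getLast?_append_of_ne_nil _ (List.cons_ne_nil _ _),
      List.getLast?_append_of_ne_nil _ (List.cons_ne_nil _ _)]
  length_lt := by simp [List.length_pos_iff.2 hK]
  isChain := by
    have h₁ : (L₁ ++ [p]).IsChain (Link G M) := hA.infix ⟨[], K ++ q :: L₂, by simp⟩
    have h₂ : (q :: L₂).IsChain (Link G M) := hA.infix ⟨L₁ ++ p :: K, [], by simp⟩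
    simpa using h₁.append h₂ (by simpa using hpq)
  mem_or_swap_mem r hr := Or.inl (by simp at hr ⊢; tauto)
  subperm := (verts_sublist_verts (by simp)).subperm

lemma isShortcut_flip {L₁ K₁ B K₂ L₂ : List (V × V)} {a b : V × V}
    (hA : (L₁ ++ a :: K₁ ++ B ++ K₂ ++ b :: L₂).IsChain (Link G M)) (hB : B ≠ [])
    (hK : K₁ ≠ [] ∨ K₂ ≠ []) (ha : Link G M a (B.getLast hB).swap)
    (hb : Link G M (B.head hB).swap b) :
    IsShortcut G M (L₁ ++ a :: K₁ ++ B ++ K₂ ++ b :: L₂)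
      (L₁ ++ a :: (B.map Prod.swap).reverse ++ b :: L₂) where
  head?_eq := by simp [List.head?_append]
  getLast?_eq := by
    rw [List.getLast?_append_of_ne_nil _ (List.cons_ne_nil _ _),
      List.getLast?_append_of_ne_nil _ (List.cons_ne_nil _ _)]
  length_lt := by
    have : 0 < K₁.length + K₂.length := by
      rcases hK with hK | hK <;> have := List.length_pos_iff.2 hK <;> omega
    simp; omega
  isChain := by
    have h₁ : (L₁ ++ [a]).IsChain (Link G M) := hA.infix ⟨[], K₁ ++ B ++ K₂ ++ b :: L₂, by simp⟩
    have h₂ : (b :: L₂).IsChain (Link G M) := hA.infix ⟨L₁ ++ a :: K₁ ++ B ++ K₂, [], by simp⟩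
    have hB' : ((B.map Prod.swap).reverse).IsChain (Link G M) := by
      rw [List.isChain_reverse, List.isChain_map]
      exact (hA.infix ⟨L₁ ++ a :: K₁, K₂ ++ b :: L₂, by simp⟩).imp fun _ _ h ↦ h.swap
    have := h₁.append (hB'.append h₂ ?_) ?_
    · simpa using this
    · simpa [List.getLast?_reverse, List.head?_map, List.head?_eq_some_head hB] using hb
    · simpa [List.head?_reverse, List.getLast?_map, List.getLast?_eq_some_getLast hB] using ha
  mem_or_swap_mem r hr := by
    simp only [List.mem_append, List.mem_cons, List.mem_reverse, List.mem_map] at hr ⊢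
    rcases hr with (hr | rfl | ⟨t, ht, rfl⟩) | rfl | hr
    all_goals simp_all
  subperm := by
    refine List.Subperm.trans ?_ (verts_sublist_verts (P := L₁ ++ a :: B ++ b :: L₂) ?_).subperm
    · refine List.Perm.subperm ?_
      simp only [verts_append, verts_cons, verts_reverse_map_swap]
      exact ((((List.reverse_perm _).cons _).cons _).append_left _).append_right _
    · simp

variable {A A' Y : List (V × V)}

lemma IsShortcut.ne_nil_left (h : IsShortcut G M A A') : A ≠ [] :=
  List.ne_nil_of_length_pos (Nat.zero_lt_of_lt h.length_lt)

lemma IsShortcut.ne_nil (h : IsShortcut G M A A') : A' ≠ [] := by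
  intro h'
  simpa [h', eq_comm (a := none), h.ne_nil_left] using h.head?_eq

lemma IsShortcut.head_eq (h : IsShortcut G M A A') :
    A'.head h.ne_nil = A.head h.ne_nil_left :=
  Option.some_injective _ (by rw [← List.head?_eq_some_head, ← List.head?_eq_some_head, h.head?_eq])

lemma IsShortcut.getLast_eq (h : IsShortcut G M A A') :
    A'.getLast h.ne_nil = A.getLast h.ne_nil_left :=
  Option.some_injective _ (by
    rw [← List.getLast?_eq_some_getLast, ← List.getLast?_eq_some_getLast, h.getLast?_eq])

variable [Inhabited V]

lemma IsShortcut.altCycle (h : IsShortcut G M A A') (hY : Y ≠ [])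
    (hc : AltCycle G M (verts (A ++ Y))) : AltCycle G M (verts (A' ++ Y)) := by
  rw [altCycle_verts_iff] at hc ⊢
  obtain ⟨hnd, -, hpairs, hchain⟩ := hc
  refine ⟨?_, ?_, fun p hp ↦ ?_, ?_⟩
  · rw [verts_append] at hnd ⊢
    obtain ⟨l, hl, hsub⟩ := (List.subperm_append_right _).2 h.subperm
    exact hl.nodup_iff.1 (hnd.sublist hsub)
  · have := List.length_pos_iff.2 h.ne_nil
    have := List.length_pos_iff.2 hY
    simp only [List.length_append]
    omega
  · rcases List.mem_append.1 hp with hp | hp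
    · rcases h.mem_or_swap_mem p hp with hp | hp
      · exact hpairs p (List.mem_append_left _ hp)
      · simpa [Sym2.eq_swap] using hpairs _ (List.mem_append_left _ hp)
    · exact hpairs p (List.mem_append_right _ hp)
  · rw [isChain_append_append_take_one h.ne_nil_left hY] at hchain
    rw [isChain_append_append_take_one h.ne_nil hY, h.head_eq, h.getLast_eq]
    exact ⟨h.isChain, hchain.2⟩

variable [DecidableEq V]

lemma IsShortcut.cEdges_subset (h : IsShortcut G M A A') (hY : Y ≠ []) :
    cEdges (verts (A ++ Y)) ⊆ cEdges (verts (A' ++ Y)) ∪ (pathEdges (verts A)).toFinset := by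
  simp only [verts_append]
  refine cEdges_append_subset (verts_ne_nil h.ne_nil_left) (verts_ne_nil h.ne_nil)
    (verts_ne_nil hY) ?_ ?_
  · rw [head_verts h.ne_nil, head_verts h.ne_nil_left, h.head_eq]
  · rw [getLast_verts h.ne_nil, getLast_verts h.ne_nil_left, h.getLast_eq]

lemma IsShortcut.mem_cEdges_of_mem_matching (h : IsShortcut G M A A')
    (hc : AltCycle G M (verts (A' ++ Y))) {e : Sym2 V} (he : e ∈ cEdges (verts (A' ++ Y)))
    (heM : e ∈ M) : e ∈ cEdges (verts (A ++ Y)) := by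
  obtain ⟨p, hp, rfl⟩ := exists_mem_eq_of_mem_cEdges_verts hc he heM
  rcases List.mem_append.1 hp with hp | hp
  · rcases h.mem_or_swap_mem p hp with hp | hp
    · exact mem_cEdges_verts (List.mem_append_left _ hp)
    · simpa [Sym2.eq_swap] using mem_cEdges_verts (List.mem_append_left Y hp)
  · exact mem_cEdges_verts (List.mem_append_right _ hp)

end Shortcuts

section Independence

variable {V : Type*} {G : SimpleGraph V}

def NoSkipChord (G : SimpleGraph V) (A : List (V × V)) : Prop :=
  ∀ L₁ p K q L₂, A = L₁ ++ p :: K ++ q :: L₂ → K ≠ [] → ¬G.Adj p.2 q.1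

/-- Chords `a.2 – t.2` and `q.1 – b.1` around a segment `B` running from `q` to `t`: with them the
cycle can skip `K₁` and `K₂` by traversing `B` backwards. -/
def NoFlipChords (G : SimpleGraph V) (A : List (V × V)) : Prop :=
  ∀ L₁ a K₁ B K₂ b L₂, A = L₁ ++ a :: K₁ ++ B ++ K₂ ++ b :: L₂ → K₁ ≠ [] ∨ K₂ ≠ [] →
    ∀ q ∈ B.head?, ∀ t ∈ B.getLast?, ¬(G.Adj a.2 t.2 ∧ G.Adj q.1 b.1)

lemma NoSkipChord.infix {A T : List (V × V)} (h : NoSkipChord G A) (hT : T <:+: A) :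
    NoSkipChord G T := by
  obtain ⟨U, W, rfl⟩ := hT
  rintro L₁ p K q L₂ rfl hK
  exact h (U ++ L₁) p K q (L₂ ++ W) (by simp) hK

lemma NoFlipChords.infix {A T : List (V × V)} (h : NoFlipChords G A) (hT : T <:+: A) :
    NoFlipChords G T := by
  obtain ⟨U, W, rfl⟩ := hT
  rintro L₁ a K₁ B K₂ b L₂ rfl hK
  exact h (U ++ L₁) a K₁ B K₂ b (L₂ ++ W) (by simp) hK

lemma NoSkipChord.not_adj_last {x w u y : V × V} {T₁ T₂ : List (V × V)}
    (h₁ : NoSkipChord G ([x, w] ++ (T₁ ++ T₂) ++ [u, y])) (hT₁ : ∀ q ∈ T₁, ¬G.Adj q.1 y.1) :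
    ∀ v ∈ verts T₁, ¬G.Adj y.1 v := by
  intro v hv
  obtain ⟨q, hq, hvq⟩ := mem_verts.1 hv
  obtain ⟨pre, post, rfl⟩ := List.append_of_mem hq
  rcases Sym2.mem_iff.1 hvq with rfl | rfl
  · exact fun h ↦ hT₁ q hq h.symm
  · exact fun h ↦ h₁ ([x, w] ++ pre) q (post ++ T₂ ++ [u]) y [] (by simp) (by simp) h.symm

lemma NoSkipChord.not_adj_first {x w u y θ : V × V} {T₁ T₂ : List (V × V)}
    (h₁ : NoSkipChord G ([x, w] ++ (T₁ ++ θ :: T₂) ++ [u, y]))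
    (h₂ : NoFlipChords G ([x, w] ++ (T₁ ++ θ :: T₂) ++ [u, y])) (hθ : G.Adj θ.1 y.1) :
    ∀ v ∈ verts (θ :: T₂), ¬G.Adj x.2 v := by
  intro v hv
  obtain ⟨q, hq, hvq⟩ := mem_verts.1 hv
  obtain ⟨pre, post, hpre⟩ := List.append_of_mem hq
  rcases Sym2.mem_iff.1 hvq with rfl | rfl
  · exact h₁ [] x (w :: T₁ ++ pre) q (post ++ [u, y]) (by simp [hpre]) (by simp)
  · refine fun h ↦ h₂ [] x (w :: T₁) (pre ++ [q]) (post ++ [u]) y [] (by simp [hpre])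
      (by simp) θ ?_ q (by simp) ⟨h, hθ⟩
    cases pre <;> simp_all

def arcLength : ℕ → ℕ
  | 0 => 3
  | p + 1 => 2 * arcLength p + 4

lemma four_mul_arcLength_le (p : ℕ) : 4 * arcLength p ≤ 4 ^ (p + 2) := by
  induction p with
  | zero => norm_num [arcLength]
  | succ p ih =>
    have : 4 ^ 2 ≤ 4 ^ (p + 2) := Nat.pow_le_pow_right (by norm_num) (by omega)
    rw [arcLength, pow_succ]
    omega

variable [DecidableEq V]

lemma exists_indep_insert {A T : List (V × V)} (hT : T <:+: A) {z : V} (hzA : z ∈ verts A)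
    (hzT : z ∉ verts T) (hz : ∀ v ∈ verts T, ¬G.Adj z v) {n : ℕ}
    (h : ∃ S : Finset V, (∀ v ∈ S, v ∈ verts T) ∧ (∀ u ∈ S, ∀ v ∈ S, ¬G.Adj u v) ∧
      S.card = n) :
    ∃ S : Finset V, (∀ v ∈ S, v ∈ verts A) ∧ (∀ u ∈ S, ∀ v ∈ S, ¬G.Adj u v) ∧
      S.card = n + 1 := by
  obtain ⟨S, hST, hS, rfl⟩ := h
  refine ⟨insert z S, fun v hv ↦ ?_, fun u hu v hv ↦ ?_, Finset.card_insert_of_notMem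
    fun hzS ↦ hzT (hST z hzS)⟩
  · rcases Finset.mem_insert.1 hv with rfl | hv
    exacts [hzA, (verts_sublist_verts hT.sublist).subset (hST v hv)]
  · rcases Finset.mem_insert.1 hu with hu | hu <;> rcases Finset.mem_insert.1 hv with hv | hv
    · exact hu ▸ hv ▸ G.irrefl
    · exact hu ▸ hz v (hST v hv)
    · exact hv ▸ fun h ↦ hz u (hST u hu) h.symm
    · exact hS u hu v hv

theorem exists_indep_of_noSkipChord_of_noFlipChords (p : ℕ) {A : List (V × V)}
    (hnd : (verts A).Nodup) (h₁ : NoSkipChord G A) (h₂ : NoFlipChords G A)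
    (hlen : arcLength p ≤ A.length) :
    ∃ S : Finset V, (∀ v ∈ S, v ∈ verts A) ∧ (∀ u ∈ S, ∀ v ∈ S, ¬G.Adj u v) ∧
      S.card = p + 2 := by
  induction p generalizing A with
  | zero =>
    match A, hlen with
    | x :: w :: y :: R, _ =>
      have hxy : ¬G.Adj x.2 y.1 := h₁ [] x [w] y R rfl (List.cons_ne_nil _ _)
      have hne : x.2 ≠ y.1 := fun h ↦ by simp [h] at hnd
      refine ⟨{x.2, y.1}, by simp, ?_, by simp [hne]⟩
      simp only [Finset.mem_insert, Finset.mem_singleton]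
      rintro u (rfl | rfl) v (rfl | rfl)
      exacts [G.irrefl, hxy, fun h ↦ hxy h.symm, G.irrefl]
  | succ p ih =>
    obtain ⟨x, w, T, u, y, rfl⟩ := exists_eq_pair_append_append_pair (l := A)
      (by simp only [arcLength] at hlen; omega)
    -- Split the inner part at the first pair whose first vertex is adjacent to `y.1`: either
    -- the part before it is long, or the part from it on is.
    obtain ⟨T₁, T₂, rfl, hT₁y, hT₂y⟩ := exists_split_at_first (fun q : V × V ↦ G.Adj q.1 y.1) T
    have hlenT : 2 * arcLength p ≤ T₁.length + T₂.length := by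
      simp only [arcLength, List.length_append] at hlen; simp at hlen; omega
    by_cases hT₁ : arcLength p ≤ T₁.length
    · have hinf : T₁ <:+: [x, w] ++ (T₁ ++ T₂) ++ [u, y] := ⟨[x, w], T₂ ++ [u, y], by simp⟩
      refine exists_indep_insert (z := y.1) hinf (by simp)
        (fun hy ↦ disjoint_verts_of_append_sublist hnd (T := T₁) (U := [y]) (by simp) hy
          (by simp))
        (h₁.not_adj_last hT₁y)
        (ih (hnd.sublist (verts_sublist_verts hinf.sublist)) (h₁.infix hinf) (h₂.infix hinf) hT₁)
    · obtain ⟨θ, T₂, rfl⟩ := List.exists_cons_of_ne_nil (l := T₂)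
        (by rintro rfl; simp at hlenT; omega)
      have hinf : θ :: T₂ <:+: [x, w] ++ (T₁ ++ θ :: T₂) ++ [u, y] :=
        ⟨[x, w] ++ T₁, [u, y], by simp⟩
      have hsub : ([x] ++ θ :: T₂).Sublist ([x, w] ++ (T₁ ++ θ :: T₂) ++ [u, y]) := by
        simpa using List.Sublist.append (l₁ := [x]) (l₂ := [x, w] ++ T₁) (by simp)
          (List.sublist_append_left (θ :: T₂) [u, y])
      refine exists_indep_insert (z := x.2) hinf (by simp)
        (disjoint_verts_of_append_sublist hnd hsub (by simp))
        (h₁.not_adj_first h₂ (hT₂y θ rfl))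
        (ih (hnd.sublist (verts_sublist_verts hinf.sublist)) (h₁.infix hinf) (h₂.infix hinf)
          (by simp at hlenT ⊢; omega))

end Independence

section CleanArc

variable {V : Type*} [DecidableEq V]

lemma card_inter_pathEdges_drop_lt {L : List (V × V)} (hnd : (verts L).Nodup)
    {F : Finset (Sym2 V)} {ℓ : ℕ} {e : Sym2 V} (he : e ∈ pathEdges (verts (L.take ℓ)))
    (heF : e ∈ F) :
    (F ∩ (pathEdges (verts (L.drop ℓ))).toFinset).card <
      (F ∩ (pathEdges (verts L)).toFinset).card := by
  have hL : verts L = verts (L.take ℓ) ++ verts (L.drop ℓ) := by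
    rw [← verts_append, List.take_append_drop]
  refine Finset.card_lt_card ⟨Finset.inter_subset_inter_left fun e' he' ↦ ?_, fun hsub ↦ ?_⟩
  · rw [List.mem_toFinset, hL] at *
    exact pathEdges_subset_of_infix (List.suffix_append _ _).isInfix he'
  · have he' := List.mem_toFinset.1 (Finset.mem_inter.1
      (hsub (Finset.mem_inter.2 ⟨heF, List.mem_toFinset.2 (hL ▸ pathEdges_subset_of_infix
        (List.prefix_append _ _).isInfix he)⟩))).2
    induction e using Sym2.ind with
    | _ u w =>
      rw [hL] at hnd
      exact List.disjoint_of_nodup_append hnd (mem_of_mem_pathEdges he (Sym2.mem_mk_left u w))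
        (mem_of_mem_pathEdges he' (Sym2.mem_mk_left u w))

lemma exists_clean_infix (F : Finset (Sym2 V)) (ℓ m : ℕ) {L : List (V × V)}
    (hnd : (verts L).Nodup) (hlen : (m + 1) * ℓ ≤ L.length)
    (hF : (F ∩ (pathEdges (verts L)).toFinset).card ≤ m) :
    ∃ X A Z, L = X ++ A ++ Z ∧ A.length = ℓ ∧ ∀ e ∈ pathEdges (verts A), e ∉ F := by
  induction m generalizing L with
  | zero =>
    refine ⟨[], L.take ℓ, L.drop ℓ, by simp, List.length_take_of_le (by omega), fun e he heF ↦ ?_⟩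
    have := card_inter_pathEdges_drop_lt hnd he heF
    omega
  | succ m ih =>
    by_cases hclean : ∀ e ∈ pathEdges (verts (L.take ℓ)), e ∉ F
    · exact ⟨[], L.take ℓ, L.drop ℓ, by simp,
        List.length_take_of_le ((Nat.le_mul_of_pos_left ℓ (by omega)).trans hlen), hclean⟩
    push Not at hclean
    obtain ⟨e, he, heF⟩ := hclean
    obtain ⟨X, A, Z, hL, hA, hAF⟩ := ih (L := L.drop ℓ)
      (hnd.sublist (verts_sublist_verts (List.drop_sublist _ _)))
      (by rw [List.length_drop]; rw [add_mul] at hlen; omega)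
      (by have := card_inter_pathEdges_drop_lt hnd he heF; omega)
    refine ⟨L.take ℓ ++ X, A, Z, ?_, hA, hAF⟩
    calc L = L.take ℓ ++ L.drop ℓ := (List.take_append_drop ℓ L).symm
      _ = L.take ℓ ++ X ++ A ++ Z := by rw [hL]; simp

end CleanArc

section Shortening

variable {V : Type*} [Inhabited V] [DecidableEq V] {G : SimpleGraph V} {M : Set (Sym2 V)}

theorem exists_isShortcut (hM : ∀ v : V, ∃! e, e ∈ M ∧ v ∈ e) {p : ℕ}
    (hα : ∀ S : Finset V, (∀ u ∈ S, ∀ v ∈ S, ¬G.Adj u v) → S.card ≤ p + 1)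
    {A Y : List (V × V)} (hc : AltCycle G M (verts (A ++ Y))) (hA : arcLength p ≤ A.length) :
    ∃ A', IsShortcut G M A A' := by
  by_contra hno
  obtain ⟨hnd, -, -, hchain⟩ := altCycle_verts_iff.1 hc
  have hAchain : A.IsChain (Link G M) := hchain.infix ⟨[], Y ++ (A ++ Y).take 1, by simp⟩
  have hchord : ∀ P₁ P₂, A ++ Y = P₁ ++ P₂ → ∀ u ∈ verts P₁, ∀ v ∈ verts P₂, s(u, v) ∉ M :=
    fun P₁ P₂ h u hu v hv ↦ chord_not_mem hM (h ▸ hc) hu hv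
  have h₁ : NoSkipChord G A := by
    rintro L₁ x K y L₂ rfl hK hadj
    exact hno ⟨_, isShortcut_skip hAchain hK
      ⟨hadj, hchord (L₁ ++ x :: K) (y :: L₂ ++ Y) (by simp) _ (by simp) _ (by simp)⟩⟩
  have h₂ : NoFlipChords G A := by
    rintro L₁ a K₁ B K₂ b L₂ rfl hK q hq t ht ⟨hat, hqb⟩
    have hB : B ≠ [] := by rintro rfl; simp at hq
    obtain rfl : B.head hB = q :=
      Option.some_injective _ ((List.head?_eq_some_head hB).symm.trans hq)
    obtain rfl : B.getLast hB = t :=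
      Option.some_injective _ ((List.getLast?_eq_some_getLast hB).symm.trans ht)
    refine hno ⟨_, isShortcut_flip hAchain hB hK ⟨hat, ?_⟩ ⟨hqb, ?_⟩⟩
    · exact hchord (L₁ ++ [a] ++ K₁) (B ++ K₂ ++ b :: L₂ ++ Y) (by simp) _ (by simp) _
        (by simp [snd_mem_verts (List.getLast_mem hB)])
    · exact hchord (L₁ ++ a :: K₁ ++ B ++ K₂) (b :: L₂ ++ Y) (by simp) _
        (by simp [fst_mem_verts (List.head_mem hB)]) _ (by simp)
  obtain ⟨S, -, hS, hcard⟩ := exists_indep_of_noSkipChord_of_noFlipChords p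
    (hnd.sublist (verts_sublist_verts (List.sublist_append_left _ _))) h₁ h₂ hA
  have := hα S hS
  omega

theorem exists_shorter_altCycle (hM : ∀ v : V, ∃! e, e ∈ M ∧ v ∈ e) {p : ℕ}
    (hα : ∀ S : Finset V, (∀ u ∈ S, ∀ v ∈ S, ¬G.Adj u v) → S.card ≤ p + 1) {D : List V}
    (hD : AltCycle G M D) (F : Finset (Sym2 V))
    (hlong : 2 * ((F ∩ cEdges D).card + 1) * arcLength p < D.length) :
    ∃ N, AltCycle G M N ∧ (∀ v ∈ N, v ∈ D) ∧ (∀ e ∈ cEdges N, e ∈ M → e ∈ cEdges D) ∧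
      (∀ e ∈ F, e ∈ cEdges D → e ∈ cEdges N) ∧ N.length < D.length := by
  obtain ⟨P, rfl⟩ := exists_verts_eq (Nat.even_iff.2 hD.2.2.1)
  have hF : (F ∩ (pathEdges (verts P)).toFinset).card ≤ (F ∩ cEdges (verts P)).card := by
    refine Finset.card_le_card (Finset.inter_subset_inter_left fun e he ↦ ?_)
    rw [cEdges_eq, List.mem_toFinset] at *
    exact pathEdges_subset_of_infix (List.prefix_append _ _).isInfix he
  rw [length_verts] at hlong
  obtain ⟨X, A, Z, rfl, hA, hAF⟩ := exists_clean_infix F (arcLength p) _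
    (altCycle_verts_iff.1 hD).1 (by nlinarith) hF
  have hY : Z ++ X ≠ [] := by
    rintro h
    simp only [List.append_eq_nil_iff] at h
    simp [h.1, h.2, hA] at hlong
    nlinarith
  -- rotate the cycle so that the clean arc comes first
  have hc : AltCycle G M (verts (A ++ (Z ++ X))) := by
    rw [← List.append_assoc, altCycle_verts_append_comm]
    simpa using hD
  have hE : cEdges (verts (A ++ (Z ++ X))) = cEdges (verts (X ++ A ++ Z)) := by
    simp only [verts_append]
    rw [← List.append_assoc, cEdges_append_comm, List.append_assoc]
  obtain ⟨A', hA'⟩ := exists_isShortcut hM hα hc hA.ge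
  refine ⟨verts (A' ++ (Z ++ X)), hA'.altCycle hY hc, fun v hv ↦ ?_,
    fun e he heM ↦ hE ▸ hA'.mem_cEdges_of_mem_matching (hA'.altCycle hY hc) he heM,
    fun e heF he ↦ ?_, ?_⟩
  · have := ((List.subperm_append_right (verts (Z ++ X))).2 hA'.subperm).subset
      (by simpa using hv)
    simp only [verts_append, List.mem_append] at this ⊢
    tauto
  · rcases Finset.mem_union.1 (hA'.cEdges_subset hY (hE ▸ he)) with h | h
    · exact h
    · exact absurd heF (hAF e (List.mem_toFinset.1 h))
  · have := hA'.length_lt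
    simp
    omega

end Shortening

section Replacements

variable {V : Type*} [Inhabited V] [DecidableEq V] {G : SimpleGraph V} {M : Set (Sym2 V)}
  {c : List V} {F : Finset (Sym2 V)} {𝒟 : Finset (List V)}

lemma card_filter_Ecyc (h𝒟 : (𝒟 : Set (List V)).Pairwise fun D D' ↦ ∀ v, v ∈ D → v ∉ D')
    (P : Sym2 V → Prop) [DecidablePred P] :
    ((Ecyc 𝒟).filter P).card = ∑ D ∈ 𝒟, ((cEdges D).filter P).card := by
  rw [Ecyc, Finset.filter_biUnion, Finset.card_biUnion]
  exact fun D hD D' hD' hne ↦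
    (disjoint_cEdges (h𝒟 hD hD' hne)).mono (Finset.filter_subset _ _) (Finset.filter_subset _ _)

lemma card_Ecyc_le_sum_length (𝒟 : Finset (List V)) : (Ecyc 𝒟).card ≤ ∑ D ∈ 𝒟, D.length :=
  Finset.card_biUnion_le.trans (Finset.sum_le_sum fun D _ ↦ card_cEdges_le D)

structure IsReplacement (G : SimpleGraph V) (M : Set (Sym2 V)) (c : List V)
    (F : Finset (Sym2 V)) (𝒟 : Finset (List V)) : Prop where
  altCycle : ∀ D ∈ 𝒟, AltCycle G M D
  subset : ∀ D ∈ 𝒟, ∀ v ∈ D, v ∈ c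
  pairwise : (𝒟 : Set (List V)).Pairwise fun D D' ↦ ∀ v, v ∈ D → v ∉ D'
  subset_Ecyc : F ⊆ Ecyc 𝒟
  mem_cEdges_of_mem_matching : ∀ D ∈ 𝒟, ∀ e ∈ cEdges D, e ∈ M → e ∈ cEdges c

lemma isReplacement_singleton (hc : AltCycle G M c) (hF : F ⊆ cEdges c) :
    IsReplacement G M c F {c} where
  altCycle D hD := by rwa [Finset.mem_singleton.1 hD]
  subset D hD v hv := by rwa [Finset.mem_singleton.1 hD] at hv
  pairwise := by simp
  subset_Ecyc := by simpa [Ecyc] using hF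
  mem_cEdges_of_mem_matching D hD e he _ := by rwa [Finset.mem_singleton.1 hD] at he

lemma IsReplacement.erase (h : IsReplacement G M c F 𝒟) {D : List V}
    (hF : ∀ e ∈ F, e ∉ cEdges D) : IsReplacement G M c F (𝒟.erase D) where
  altCycle E hE := h.altCycle E (Finset.mem_of_mem_erase hE)
  subset E hE := h.subset E (Finset.mem_of_mem_erase hE)
  pairwise := h.pairwise.mono (by simp)
  subset_Ecyc e he := by
    obtain ⟨E, hE, heE⟩ := Finset.mem_biUnion.1 (h.subset_Ecyc he)
    exact Finset.mem_biUnion.2 ⟨E, Finset.mem_erase.2 ⟨by rintro rfl; exact hF e he heE, hE⟩, heE⟩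
  mem_cEdges_of_mem_matching E hE := h.mem_cEdges_of_mem_matching E (Finset.mem_of_mem_erase hE)

lemma IsReplacement.replace (h : IsReplacement G M c F 𝒟) {D N : List V} (hD : D ∈ 𝒟)
    (hN : AltCycle G M N) (hND : ∀ v ∈ N, v ∈ D) (hNM : ∀ e ∈ cEdges N, e ∈ M → e ∈ cEdges D)
    (hNF : ∀ e ∈ F, e ∈ cEdges D → e ∈ cEdges N) :
    IsReplacement G M c F (insert N (𝒟.erase D)) where
  altCycle E hE := by
    rcases Finset.mem_insert.1 hE with rfl | hE
    exacts [hN, h.altCycle E (Finset.mem_of_mem_erase hE)]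
  subset E hE v hv := by
    rcases Finset.mem_insert.1 hE with rfl | hE
    exacts [h.subset D hD v (hND v hv), h.subset E (Finset.mem_of_mem_erase hE) v hv]
  pairwise := by
    rw [Finset.coe_insert, Set.pairwise_insert]
    refine ⟨h.pairwise.mono (by simp), fun E hE _ ↦ ?_⟩
    obtain ⟨hED, hE⟩ := Finset.mem_erase.1 hE
    have hDE := h.pairwise hD hE (Ne.symm hED)
    exact ⟨fun v hv ↦ hDE v (hND v hv), fun v hv hvN ↦ hDE v (hND v hvN) hv⟩
  subset_Ecyc e he := by
    obtain ⟨E, hE, heE⟩ := Finset.mem_biUnion.1 (h.subset_Ecyc he)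
    rw [Ecyc, Finset.mem_biUnion]
    by_cases hED : E = D
    · exact ⟨N, Finset.mem_insert_self _ _, hNF e he (hED ▸ heE)⟩
    · exact ⟨E, Finset.mem_insert_of_mem (Finset.mem_erase.2 ⟨hED, hE⟩), heE⟩
  mem_cEdges_of_mem_matching E hE e he heM := by
    rcases Finset.mem_insert.1 hE with rfl | hE
    exacts [h.mem_cEdges_of_mem_matching D hD e (hNM e he heM) heM,
      h.mem_cEdges_of_mem_matching E (Finset.mem_of_mem_erase hE) e he heM]

theorem exists_isReplacement_forall_length_le (hM : ∀ v : V, ∃! e, e ∈ M ∧ v ∈ e) {p : ℕ}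
    (hα : ∀ S : Finset V, (∀ u ∈ S, ∀ v ∈ S, ¬G.Adj u v) → S.card ≤ p + 1)
    (hc : AltCycle G M c) (hF : F ⊆ cEdges c) :
    ∃ 𝒟, IsReplacement G M c F 𝒟 ∧ ∀ D ∈ 𝒟,
      1 ≤ (F ∩ cEdges D).card ∧ D.length ≤ 2 * ((F ∩ cEdges D).card + 1) * arcLength p := by
  suffices ∀ n 𝒟, IsReplacement G M c F 𝒟 → ∑ D ∈ 𝒟, D.length = n →
      ∃ 𝒟', IsReplacement G M c F 𝒟' ∧ ∀ D ∈ 𝒟',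
        1 ≤ (F ∩ cEdges D).card ∧ D.length ≤ 2 * ((F ∩ cEdges D).card + 1) * arcLength p from
    this _ _ (isReplacement_singleton hc hF) rfl
  intro n
  induction n using Nat.strong_induction_on with
  | _ n ih =>
    rintro 𝒟 h𝒟 rfl
    by_cases hgood : ∀ D ∈ 𝒟,
        1 ≤ (F ∩ cEdges D).card ∧ D.length ≤ 2 * ((F ∩ cEdges D).card + 1) * arcLength p
    · exact ⟨𝒟, h𝒟, hgood⟩
    push Not at hgood
    obtain ⟨D, hD, hbad⟩ := hgood
    by_cases hρ : (F ∩ cEdges D).card = 0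
    · refine ih _ (Finset.sum_erase_lt_of_pos hD (by have := (h𝒟.altCycle D hD).2.1; omega)) _
        (h𝒟.erase fun e he heD ↦ ?_) rfl
      exact Finset.notMem_empty e (Finset.card_eq_zero.1 hρ ▸ Finset.mem_inter.2 ⟨he, heD⟩)
    · obtain ⟨N, hN, hND, hNM, hNF, hlen⟩ :=
        exists_shorter_altCycle hM hα (h𝒟.altCycle D hD) F (hbad (by omega))
      exact ih _ (sum_insert_erase_lt hD hlen) _ (h𝒟.replace hD hN hND hNM hNF) rfl

lemma IsReplacement.sum_length_le (h : IsReplacement G M c F 𝒟) {ℓ : ℕ}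
    (hlen : ∀ D ∈ 𝒟, 1 ≤ (F ∩ cEdges D).card ∧ D.length ≤ 2 * ((F ∩ cEdges D).card + 1) * ℓ) :
    ∑ D ∈ 𝒟, D.length ≤ 4 * ℓ * F.card := by
  have hF : ∑ D ∈ 𝒟, (F ∩ cEdges D).card ≤ F.card := by
    simp_rw [Finset.inter_comm F, ← Finset.filter_mem_eq_inter, ← card_filter_Ecyc h.pairwise]
    exact Finset.card_le_card fun e he ↦ (Finset.mem_filter.1 he).2
  calc ∑ D ∈ 𝒟, D.length ≤ ∑ D ∈ 𝒟, 4 * ℓ * (F ∩ cEdges D).card :=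
        Finset.sum_le_sum fun D hD ↦ by obtain ⟨h₁, h₂⟩ := hlen D hD; nlinarith
    _ = 4 * ℓ * ∑ D ∈ 𝒟, (F ∩ cEdges D).card := (Finset.mul_sum ..).symm
    _ ≤ 4 * ℓ * F.card := Nat.mul_le_mul_left _ hF

theorem exists_isReplacement_sum_length_le (hM : ∀ v : V, ∃! e, e ∈ M ∧ v ∈ e) {p : ℕ}
    (hα : ∀ S : Finset V, (∀ u ∈ S, ∀ v ∈ S, ¬G.Adj u v) → S.card ≤ p + 1)
    (hc : AltCycle G M c) (hF : F ⊆ cEdges c) :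
    ∃ 𝒟, IsReplacement G M c F 𝒟 ∧ ∑ D ∈ 𝒟, D.length ≤ 4 ^ (p + 2) * F.card := by
  obtain ⟨𝒟, h𝒟, hlen⟩ := exists_isReplacement_forall_length_le hM hα hc hF
  exact ⟨𝒟, h𝒟, (h𝒟.sum_length_le hlen).trans
    (Nat.mul_le_mul_right _ (four_mul_arcLength_le p))⟩

lemma pairwise_biUnion {𝒞 : Finset (List V)} {F : List V → Finset (Sym2 V)}
    {𝒟 : List V → Finset (List V)}
    (h𝒞 : (𝒞 : Set (List V)).Pairwise fun c d ↦ ∀ v, v ∈ c → v ∉ d)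
    (h𝒟 : ∀ c ∈ 𝒞, IsReplacement G M c (F c) (𝒟 c)) :
    (𝒞.biUnion 𝒟 : Set (List V)).Pairwise fun D E ↦ ∀ v, v ∈ D → v ∉ E := by
  intro D hD E hE hne
  obtain ⟨c, hc, hD⟩ := Finset.mem_biUnion.1 hD
  obtain ⟨c', hc', hE⟩ := Finset.mem_biUnion.1 hE
  rcases eq_or_ne c c' with rfl | hcc
  · exact (h𝒟 c hc).pairwise hD hE hne
  · exact fun v hvD hvE ↦
      h𝒞 hc hc' hcc v ((h𝒟 c hc).subset D hD v hvD) ((h𝒟 c' hc').subset E hE v hvE)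

end Replacements

end CycleShortening

open CycleShortening

theorem stmt_10_general {V : Type*} [Inhabited V] [DecidableEq V] (G : SimpleGraph V)
    (α : ℕ) (hα : ∀ S : Finset V, (∀ u ∈ S, ∀ v ∈ S, ¬ G.Adj u v) → S.card ≤ α)
    (M : Set (Sym2 V))
    (hM : M ⊆ G.edgeSet ∧ ∀ v : V, ∃! e, e ∈ M ∧ v ∈ e)
    (red : Set (Sym2 V)) [DecidablePred (· ∈ red)]
    (𝒞 : Finset (List V)) (h𝒞 : ∀ c ∈ 𝒞, AltCycle G M c)
    (hdisj : (𝒞 : Set (List V)).Pairwise fun c d => ∀ v, v ∈ c → v ∉ d)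
    (R : Finset (Sym2 V)) (hR : R = (Ecyc 𝒞).filter (· ∈ red))
    (k : ℕ) (hk : R.card = k) :
    ∃ 𝒞' : Finset (List V), (∀ c ∈ 𝒞', AltCycle G M c) ∧
      (𝒞' : Set (List V)).Pairwise (fun c d => ∀ v, v ∈ c → v ∉ d) ∧
      R ⊆ Ecyc 𝒞' ∧ (Ecyc 𝒞').card ≤ k * 4 ^ (α + 1) ∧
      ∀ e ∈ Ecyc 𝒞' \ Ecyc 𝒞, e ∉ M := by
  obtain ⟨p, rfl⟩ : ∃ p, α = p + 1 :=
    Nat.exists_eq_add_of_le' (by simpa using hα {default} (by simp))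
  choose! 𝒟 h𝒟 hlen using fun c hc ↦
    exists_isReplacement_sum_length_le hM.2 hα (h𝒞 c hc) ((cEdges c).filter_subset (· ∈ red))
  have hEcyc : Ecyc (𝒞.biUnion 𝒟) = 𝒞.biUnion fun c ↦ Ecyc (𝒟 c) := Finset.biUnion_biUnion _ _ _
  refine ⟨𝒞.biUnion 𝒟, fun D hD ↦ ?_, pairwise_biUnion hdisj h𝒟, fun e he ↦ ?_, ?_,
    fun e he heM ↦ ?_⟩
  · obtain ⟨c, hc, hD⟩ := Finset.mem_biUnion.1 hD
    exact (h𝒟 c hc).altCycle D hD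
  · obtain ⟨hec, hred⟩ := Finset.mem_filter.1 (hR ▸ he)
    obtain ⟨c, hc, hec⟩ := Finset.mem_biUnion.1 hec
    exact hEcyc ▸ Finset.mem_biUnion.2
      ⟨c, hc, (h𝒟 c hc).subset_Ecyc (Finset.mem_filter.2 ⟨hec, hred⟩)⟩
  · calc (Ecyc (𝒞.biUnion 𝒟)).card ≤ ∑ c ∈ 𝒞, ∑ D ∈ 𝒟 c, D.length :=
          hEcyc ▸ Finset.card_biUnion_le.trans
            (Finset.sum_le_sum fun c _ ↦ card_Ecyc_le_sum_length _)
      _ ≤ ∑ c ∈ 𝒞, 4 ^ (p + 2) * ((cEdges c).filter (· ∈ red)).card := Finset.sum_le_sum hlen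
      _ = k * 4 ^ (p + 1 + 1) := by
          rw [← Finset.mul_sum, ← card_filter_Ecyc hdisj, ← hR, hk, mul_comm]
  · obtain ⟨heD, he𝒞⟩ := Finset.mem_sdiff.1 he
    obtain ⟨c, hc, heD⟩ := Finset.mem_biUnion.1 (hEcyc ▸ heD)
    obtain ⟨D, hD, heD⟩ := Finset.mem_biUnion.1 heD
    exact he𝒞 (Finset.mem_biUnion.2 ⟨c, hc, (h𝒟 c hc).mem_cEdges_of_mem_matching D hD e heD heM⟩)

/-- Proposition `cycleshortening`: any set of disjoint `M`-alternating cycles with `k` red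
edges can be replaced by one of total size at most `k·4^(α+1)` containing all those red
edges, where all new edges are non-matching edges. -/
theorem stmt_10 {V : Type*} [Inhabited V] [DecidableEq V] (G : SimpleGraph V)
    (α : ℕ) (hα : ∀ S : Finset V, (∀ u ∈ S, ∀ v ∈ S, ¬ G.Adj u v) → S.card ≤ α)
    (M : Set (Sym2 V))
    (hM : M ⊆ G.edgeSet ∧ ∀ v : V, ∃! e, e ∈ M ∧ v ∈ e)
    (w : Sym2 V → ℕ) (red : Set (Sym2 V)) [DecidablePred (· ∈ red)]
    (𝒞 : Finset (List V)) (h𝒞 : ∀ c ∈ 𝒞, AltCycle G M c)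
    (hdisj : (𝒞 : Set (List V)).Pairwise fun c d => ∀ v, v ∈ c → v ∉ d)
    (R : Finset (Sym2 V)) (hR : R = (Ecyc 𝒞).filter (· ∈ red))
    (k : ℕ) (hk : R.card = k) :
    ∃ 𝒞' : Finset (List V), (∀ c ∈ 𝒞', AltCycle G M c) ∧
      (𝒞' : Set (List V)).Pairwise (fun c d => ∀ v, v ∈ c → v ∉ d) ∧
      R ⊆ Ecyc 𝒞' ∧ (Ecyc 𝒞').card ≤ k * 4 ^ (α + 1) ∧
      ∀ e ∈ Ecyc 𝒞' \ Ecyc 𝒞, e ∉ M :=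
  stmt_10_general G α hα M hM red 𝒞 h𝒞 hdisj R hR k hk
end

section
/- Let G be a graph with positive integer edge weights w, and construct G′ by replacing each edge e with a path of length 2·w(e) − 1 whose edges are alternately colored red and blue, starting and ending with red. Then G has a perfect matching of total weight exactly W if and only if G′ has a perfect matching with exactly W red edges. -/
/-- `M` is a perfect matching of `H` on the vertices satisfying `valid`: its edges are
edges of `H` and every valid vertex lies on exactly one of them. -/
def IsPMOn {α : Type*} (H : SimpleGraph α) (valid : α → Prop)
    (M : Finset (Sym2 α)) : Prop :=
  (↑M : Set (Sym2 α)) ⊆ H.edgeSet ∧ ∀ v : α, valid v → ∃! e, e ∈ M ∧ v ∈ e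

namespace Subdivide

variable {V : Type*}

/-- Adjacency of the subdivided graph `G'`: each edge `e` of `G` (with chosen endpoints
`fst e` and `snd e`) is replaced by a path of length `2·w(e) − 1`, whose internal
vertices are `(e, 0), …, (e, 2·w(e) − 3)`. -/
def rel (G : SimpleGraph V) (w : Sym2 V → ℕ) (fst snd : Sym2 V → V) :
    V ⊕ (Sym2 V × ℕ) → V ⊕ (Sym2 V × ℕ) → Prop
  | Sum.inl u, Sum.inl v => G.Adj u v ∧ w s(u, v) = 1
  | Sum.inl u, Sum.inr (e, i) =>
      e ∈ G.edgeSet ∧ 2 ≤ w e ∧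
        ((u = fst e ∧ i = 0) ∨ (u = snd e ∧ i = 2 * w e - 3))
  | Sum.inr (e, i), Sum.inl u =>
      e ∈ G.edgeSet ∧ 2 ≤ w e ∧
        ((u = fst e ∧ i = 0) ∨ (u = snd e ∧ i = 2 * w e - 3))
  | Sum.inr (e, i), Sum.inr (e', j) =>
      e = e' ∧ e ∈ G.edgeSet ∧
        ((j = i + 1 ∧ j ≤ 2 * w e - 3) ∨ (i = j + 1 ∧ i ≤ 2 * w e - 3))

/-- The vertices of the subdivided graph: original vertices together with the internal
vertices `(e, i)`, `i ≤ 2·w(e) − 3`, of the path replacing an edge `e` of `G`. -/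
def valid (G : SimpleGraph V) (w : Sym2 V → ℕ) : V ⊕ (Sym2 V × ℕ) → Prop
  | Sum.inl _ => True
  | Sum.inr (e, i) => e ∈ G.edgeSet ∧ 2 ≤ w e ∧ i ≤ 2 * w e - 3

/-- The red edges of the subdivided graph: in the path of length `2·w(e) − 1` replacing
an edge `e`, the edges at even positions (the first, the last, and every second one in
between) are red, so that the path starts and ends with red and has `w(e)` red edges. -/
def red (G : SimpleGraph V) (w : Sym2 V → ℕ) (fst snd : Sym2 V → V) :
    Set (Sym2 (V ⊕ (Sym2 V × ℕ))) :=
  {x | ∃ e ∈ G.edgeSet,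
    (w e = 1 ∧ x = s(Sum.inl (fst e), Sum.inl (snd e))) ∨
    (2 ≤ w e ∧ x = s(Sum.inl (fst e), Sum.inr (e, 0))) ∨
    (2 ≤ w e ∧ x = s(Sum.inr (e, 2 * w e - 3), Sum.inl (snd e))) ∨
    (∃ i, i % 2 = 1 ∧ i + 1 ≤ 2 * w e - 3 ∧ x = s(Sum.inr (e, i), Sum.inr (e, i + 1)))}

end Subdivide

/-!
A perfect matching `M'` of the subdivided graph covers each internal vertex of the path replacing
an edge `e` exactly once, so along that path its edges alternate: it contains either all the red
(even-numbered) edges of the path or all the blue ones. Hence `M'` is determined by the set `M` of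
edges of `G` whose paths are red in `M'`, and `M'` covers an original vertex exactly once iff `M`
does. This bijection between perfect matchings of `G` and of the subdivision turns the weight
`∑ e ∈ M, w e` into the number of red edges of `M'`, the path of `e` having `w e` red edges.
-/

theorem Set.InjOn.existsUnique_mem_image_iff {α β : Type*} {f : α → β} {s : Set α}
    (hf : s.InjOn f) : (∃! y, y ∈ f '' s) ↔ ∃! x, x ∈ s := by
  constructor
  · rintro ⟨_, ⟨x, hx, rfl⟩, hu⟩
    exact ⟨x, hx, fun x' hx' => hf hx' hx (hu _ ⟨x', hx', rfl⟩)⟩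
  · rintro ⟨x, hx, hu⟩
    refine ⟨f x, ⟨x, hx, rfl⟩, ?_⟩
    rintro _ ⟨x', hx', rfl⟩
    rw [hu x' hx']

theorem mem_iff_notMem_of_existsUnique_mem {α : Type*} {s : Finset (Sym2 α)} {u : α}
    {x y : Sym2 α} (h : ∃! z, z ∈ s ∧ u ∈ z) (hx : u ∈ x) (hy : u ∈ y) (hxy : x ≠ y)
    (hs : ∀ z ∈ s, u ∈ z → z = x ∨ z = y) : x ∈ s ↔ y ∉ s := by
  obtain ⟨z, ⟨hz, huz⟩, hu⟩ := h
  refine ⟨fun hxs hys => hxy ((hu x ⟨hxs, hx⟩).trans (hu y ⟨hys, hy⟩).symm), fun hys => ?_⟩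
  rcases hs z hz huz with rfl | rfl
  exacts [hz, absurd hz hys]

namespace Subdivide

open Sum

variable {V : Type*} {G : SimpleGraph V} {w : Sym2 V → ℕ} {fst snd : Sym2 V → V}

lemma mem_iff_eq_fst_or_eq_snd (hfs : ∀ e : Sym2 V, s(fst e, snd e) = e) {e : Sym2 V} {v : V} :
    v ∈ e ↔ v = fst e ∨ v = snd e := by
  conv_lhs => rw [← hfs e]
  exact Sym2.mem_iff

lemma fst_ne_snd (hfs : ∀ e : Sym2 V, s(fst e, snd e) = e) {e : Sym2 V} (he : e ∈ G.edgeSet) :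
    fst e ≠ snd e := by
  rw [← hfs e] at he
  exact G.ne_of_adj he

/-- Vertex `k` of the path replacing `e`, for `k ≤ 2 * w e - 1`; its internal vertex `k` is
`(e, k - 1)`. Edge `j` of the path is `pathEdge w fst snd e j`, and it is red iff `j` is even. -/
def pathVert (w : Sym2 V → ℕ) (fst snd : Sym2 V → V) (e : Sym2 V) : ℕ → V ⊕ (Sym2 V × ℕ)
  | 0 => inl (fst e)
  | k + 1 => if k + 1 = 2 * w e - 1 then inl (snd e) else inr (e, k)

def pathEdge (w : Sym2 V → ℕ) (fst snd : Sym2 V → V) (e : Sym2 V) (j : ℕ) :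
    Sym2 (V ⊕ (Sym2 V × ℕ)) :=
  s(pathVert w fst snd e j, pathVert w fst snd e (j + 1))

lemma pathVert_eq_inr_iff {e e' : Sym2 V} {k i : ℕ} :
    pathVert w fst snd e k = inr (e', i) ↔ e' = e ∧ k = i + 1 ∧ k ≠ 2 * w e - 1 := by
  cases k with
  | zero => simp [pathVert]
  | succ k => by_cases h : k + 1 = 2 * w e - 1 <;> simp [pathVert, h, eq_comm]

lemma pathVert_eq_inl_iff {e : Sym2 V} {k : ℕ} {v : V} (hw : 0 < w e) :
    pathVert w fst snd e k = inl v ↔ (k = 0 ∧ v = fst e) ∨ (k = 2 * w e - 1 ∧ v = snd e) := by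
  cases k with
  | zero => simp [pathVert, eq_comm]; omega
  | succ k => by_cases h : k + 1 = 2 * w e - 1 <;> simp [pathVert, h, eq_comm]; omega

lemma inr_mem_pathEdge_iff {e e' : Sym2 V} {i j : ℕ} :
    inr (e', i) ∈ pathEdge w fst snd e j ↔
      e' = e ∧ (j = i ∨ j = i + 1) ∧ i + 1 ≠ 2 * w e - 1 := by
  simp only [pathEdge, Sym2.mem_iff, eq_comm (a := inr _), pathVert_eq_inr_iff]
  grind

lemma inl_mem_pathEdge_iff {e : Sym2 V} {j : ℕ} {v : V} (hj : j < 2 * w e - 1) :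
    inl v ∈ pathEdge w fst snd e j ↔ (j = 0 ∧ v = fst e) ∨ (j = 2 * w e - 2 ∧ v = snd e) := by
  simp only [pathEdge, Sym2.mem_iff, eq_comm (a := inl _), pathVert_eq_inl_iff (by omega : 0 < w e)]
  grind

lemma pathVert_last {e : Sym2 V} (hw : 0 < w e) :
    pathVert w fst snd e (2 * w e - 1) = inl (snd e) :=
  (pathVert_eq_inl_iff hw).2 (Or.inr ⟨rfl, rfl⟩)

lemma pathVert_of_pos_of_lt {e : Sym2 V} {k : ℕ} (h0 : 0 < k) (hk : k < 2 * w e - 1) :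
    pathVert w fst snd e k = inr (e, k - 1) :=
  pathVert_eq_inr_iff.2 ⟨rfl, by omega, by omega⟩

lemma pathEdge_zero_of_eq_one {e : Sym2 V} (h : w e = 1) :
    pathEdge w fst snd e 0 = s(inl (fst e), inl (snd e)) := by
  rw [pathEdge, zero_add, show 1 = 2 * w e - 1 by omega, pathVert_last (by omega)]
  rfl

lemma pathEdge_zero {e : Sym2 V} (h : 2 ≤ w e) :
    pathEdge w fst snd e 0 = s(inl (fst e), inr (e, 0)) := by
  rw [pathEdge, zero_add, pathVert_of_pos_of_lt one_pos (by omega)]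
  rfl

lemma pathEdge_last {e : Sym2 V} (h : 2 ≤ w e) :
    pathEdge w fst snd e (2 * w e - 2) = s(inr (e, 2 * w e - 3), inl (snd e)) := by
  rw [pathEdge, pathVert_of_pos_of_lt (by omega) (by omega),
    show 2 * w e - 2 + 1 = 2 * w e - 1 by omega, pathVert_last (by omega),
    show 2 * w e - 2 - 1 = 2 * w e - 3 by omega]

lemma pathEdge_of_pos {e : Sym2 V} {j : ℕ} (h0 : 0 < j) (hj : j + 1 < 2 * w e - 1) :
    pathEdge w fst snd e j = s(inr (e, j - 1), inr (e, j)) := by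
  rw [pathEdge, pathVert_of_pos_of_lt h0 (by omega), pathVert_of_pos_of_lt (by omega) hj]
  rfl

lemma pathVert_injOn {e : Sym2 V} (he : fst e ≠ snd e) (hw : 0 < w e) :
    Set.InjOn (pathVert w fst snd e) (Set.Iic (2 * w e - 1)) := by
  intro k hk k' hk' h
  simp only [Set.mem_Iic] at hk hk'
  cases hv : pathVert w fst snd e k with
  | inl v =>
    rw [hv, eq_comm, pathVert_eq_inl_iff hw] at h
    rw [pathVert_eq_inl_iff hw] at hv
    grind
  | inr p =>
    rw [hv, eq_comm, pathVert_eq_inr_iff] at h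
    rw [pathVert_eq_inr_iff] at hv
    omega

lemma eq_of_pathEdge_eq {e e' : Sym2 V} {j j' : ℕ} (hw : 2 ≤ w e) (hj : j < 2 * w e - 1)
    (h : pathEdge w fst snd e j = pathEdge w fst snd e' j') : e' = e := by
  have hmem : inr (e, j - 1) ∈ pathEdge w fst snd e j := by
    rw [inr_mem_pathEdge_iff]; exact ⟨rfl, by omega⟩
  rw [h, inr_mem_pathEdge_iff] at hmem
  exact hmem.1.symm

lemma pathEdge_inj (hfs : ∀ e : Sym2 V, s(fst e, snd e) = e) {e e' : Sym2 V} {j j' : ℕ}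
    (he : fst e ≠ snd e) (hj : j < 2 * w e - 1) (hj' : j' < 2 * w e' - 1) :
    pathEdge w fst snd e j = pathEdge w fst snd e' j' ↔ e = e' ∧ j = j' := by
  refine ⟨fun h => ?_, by rintro ⟨rfl, rfl⟩; rfl⟩
  obtain rfl : e = e' := by
    by_cases h2 : 2 ≤ w e
    · exact (eq_of_pathEdge_eq h2 hj h).symm
    by_cases h2' : 2 ≤ w e'
    · exact eq_of_pathEdge_eq h2' hj' h.symm
    obtain ⟨rfl, rfl⟩ : j = 0 ∧ j' = 0 := by omega
    rw [pathEdge_zero_of_eq_one (by omega), pathEdge_zero_of_eq_one (by omega), ← Sym2.map_mk,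
      ← Sym2.map_mk] at h
    rw [← hfs e, ← hfs e', Sym2.map.injective inl_injective h]
  refine ⟨rfl, ?_⟩
  simp only [pathEdge, Sym2.eq_iff] at h
  have hinj := pathVert_injOn (w := w) (snd := snd) he (by omega)
  rcases h with ⟨h1, -⟩ | ⟨h1, h2⟩
  · exact hinj (Set.mem_Iic.2 (by omega)) (Set.mem_Iic.2 (by omega)) h1
  · have := hinj (Set.mem_Iic.2 (by omega)) (Set.mem_Iic.2 (by omega)) h1
    have := hinj (Set.mem_Iic.2 (by omega)) (Set.mem_Iic.2 (by omega)) h2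
    omega

lemma rel_comm {a b : V ⊕ (Sym2 V × ℕ)} : rel G w fst snd a b ↔ rel G w fst snd b a := by
  rcases a with u | ⟨e, i⟩ <;> rcases b with v | ⟨e', j⟩ <;> simp only [rel]
  · rw [G.adj_comm, Sym2.eq_swap]
  · grind

lemma fromRel_rel_adj_iff {a b : V ⊕ (Sym2 V × ℕ)} :
    (SimpleGraph.fromRel (rel G w fst snd)).Adj a b ↔ a ≠ b ∧ rel G w fst snd a b := by
  rw [SimpleGraph.fromRel_adj, ← rel_comm, or_self]

lemma pathEdge_mem_edgeSet (hfs : ∀ e : Sym2 V, s(fst e, snd e) = e) {e : Sym2 V} {j : ℕ}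
    (he : e ∈ G.edgeSet) (hj : j < 2 * w e - 1) :
    pathEdge w fst snd e j ∈ (SimpleGraph.fromRel (rel G w fst snd)).edgeSet := by
  have hadj : G.Adj (fst e) (snd e) := by rw [← SimpleGraph.mem_edgeSet, hfs]; exact he
  obtain hj1 | hj1 := (show j + 1 ≤ 2 * w e - 1 from hj).lt_or_eq <;>
    obtain rfl | hj0 := Nat.eq_zero_or_pos j
  · rw [pathEdge_zero (by omega), SimpleGraph.mem_edgeSet, fromRel_rel_adj_iff]
    exact ⟨by simp, he, by omega, Or.inl ⟨rfl, rfl⟩⟩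
  · rw [pathEdge_of_pos hj0 hj1, SimpleGraph.mem_edgeSet, fromRel_rel_adj_iff]
    exact ⟨by simp; omega, rfl, he, Or.inl ⟨by omega, by omega⟩⟩
  · have h1 : w e = 1 := by omega
    rw [pathEdge_zero_of_eq_one h1, SimpleGraph.mem_edgeSet, fromRel_rel_adj_iff]
    exact ⟨by simpa using hadj.ne, hadj, by rw [hfs, h1]⟩
  · rw [show j = 2 * w e - 2 by omega, pathEdge_last (by omega), SimpleGraph.mem_edgeSet,
      fromRel_rel_adj_iff]
    exact ⟨by simp, he, by omega, Or.inr ⟨rfl, rfl⟩⟩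

lemma exists_pathEdge_eq_of_rel (hfs : ∀ e : Sym2 V, s(fst e, snd e) = e)
    {a b : V ⊕ (Sym2 V × ℕ)} (h : rel G w fst snd a b) :
    ∃ e ∈ G.edgeSet, ∃ j < 2 * w e - 1, s(a, b) = pathEdge w fst snd e j := by
  have inl_inr {u e i} (h : rel G w fst snd (inl u) (inr (e, i))) :
      ∃ f ∈ G.edgeSet, ∃ j < 2 * w f - 1, s(inl u, inr (e, i)) = pathEdge w fst snd f j := by
    obtain ⟨he, hw2, ⟨rfl, rfl⟩ | ⟨rfl, rfl⟩⟩ := h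
    · exact ⟨e, he, 0, by omega, (pathEdge_zero hw2).symm⟩
    · exact ⟨e, he, 2 * w e - 2, by omega, by rw [pathEdge_last hw2, Sym2.eq_swap]⟩
  rcases a with u | ⟨e, i⟩ <;> rcases b with v | ⟨e', j⟩
  · obtain ⟨hadj, hw1⟩ := h
    refine ⟨s(u, v), hadj, 0, by omega, ?_⟩
    rw [pathEdge_zero_of_eq_one hw1, ← Sym2.map_mk inl (fst _), hfs, Sym2.map_mk]
  · exact inl_inr h
  · rw [Sym2.eq_swap]
    exact inl_inr (rel_comm.1 h)
  · obtain ⟨rfl, he, ⟨rfl, hj⟩ | ⟨rfl, hi⟩⟩ := h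
    · exact ⟨e, he, i + 1, by omega, by rw [pathEdge_of_pos (by omega) (by omega)]; rfl⟩
    · refine ⟨e, he, j + 1, by omega, ?_⟩
      rw [pathEdge_of_pos (by omega) (by omega), Sym2.eq_swap]
      rfl

lemma mem_edgeSet_fromRel_rel_iff (hfs : ∀ e : Sym2 V, s(fst e, snd e) = e)
    {x : Sym2 (V ⊕ (Sym2 V × ℕ))} :
    x ∈ (SimpleGraph.fromRel (rel G w fst snd)).edgeSet ↔
      ∃ e ∈ G.edgeSet, ∃ j < 2 * w e - 1, x = pathEdge w fst snd e j := by
  refine ⟨fun hx => ?_, fun ⟨e, he, j, hj, hx⟩ => hx ▸ pathEdge_mem_edgeSet hfs he hj⟩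
  induction x using Sym2.ind with
  | _ a b => exact exists_pathEdge_eq_of_rel hfs (fromRel_rel_adj_iff.1 hx).2

lemma valid_inr_iff {e : Sym2 V} {i : ℕ} :
    valid G w (inr (e, i)) ↔ e ∈ G.edgeSet ∧ i + 1 < 2 * w e - 1 :=
  and_congr_right fun _ => by omega

variable (G w fst snd) in
def liftMatching (M : Set (Sym2 V)) : Set (Sym2 (V ⊕ (Sym2 V × ℕ))) :=
  {x | ∃ e ∈ G.edgeSet, ∃ j < 2 * w e - 1, (Even j ↔ e ∈ M) ∧ x = pathEdge w fst snd e j}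

lemma liftMatching_subset_edgeSet (hfs : ∀ e : Sym2 V, s(fst e, snd e) = e) (M : Set (Sym2 V)) :
    liftMatching G w fst snd M ⊆ (SimpleGraph.fromRel (rel G w fst snd)).edgeSet := by
  rintro _ ⟨e, he, j, hj, -, rfl⟩
  exact pathEdge_mem_edgeSet hfs he hj

lemma existsUnique_inr_mem_liftMatching (M : Set (Sym2 V)) {e : Sym2 V} {i : ℕ}
    (he : e ∈ G.edgeSet) (hi : i + 1 < 2 * w e - 1) :
    ∃! x, x ∈ liftMatching G w fst snd M ∧ inr (e, i) ∈ x := by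
  obtain ⟨j, hj, hpar⟩ : ∃ j, (j = i ∨ j = i + 1) ∧ (Even j ↔ e ∈ M) := by
    by_cases h : Even i ↔ e ∈ M
    · exact ⟨i, Or.inl rfl, h⟩
    · exact ⟨i + 1, Or.inr rfl, by rw [Nat.even_add_one]; tauto⟩
  refine ⟨pathEdge w fst snd e j,
    ⟨⟨e, he, j, by omega, hpar, rfl⟩, inr_mem_pathEdge_iff.2 ⟨rfl, hj, by omega⟩⟩, ?_⟩
  rintro _ ⟨⟨e', -, j', -, hpar', rfl⟩, hmem⟩
  obtain ⟨rfl, hj', -⟩ := inr_mem_pathEdge_iff.1 hmem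
  have := hpar'.trans hpar.symm
  rw [Nat.even_iff, Nat.even_iff] at this
  congr 1
  omega

variable (w fst) in
def endIndex [DecidableEq V] (v : V) (e : Sym2 V) : ℕ :=
  if v = fst e then 0 else 2 * w e - 2

lemma even_endIndex [DecidableEq V] (v : V) (e : Sym2 V) : Even (endIndex w fst v e) := by
  unfold endIndex
  split_ifs
  exacts [Even.zero, ⟨w e - 1, by omega⟩]

lemma endIndex_lt [DecidableEq V] (v : V) {e : Sym2 V} (hw : 0 < w e) :
    endIndex w fst v e < 2 * w e - 1 := by
  unfold endIndex
  split_ifs <;> omega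

lemma inl_mem_pathEdge_iff_eq_endIndex [DecidableEq V] (hfs : ∀ e : Sym2 V, s(fst e, snd e) = e)
    {e : Sym2 V} {j : ℕ} {v : V} (he : e ∈ G.edgeSet) (hj : j < 2 * w e - 1) :
    inl v ∈ pathEdge w fst snd e j ↔ v ∈ e ∧ j = endIndex w fst v e := by
  have hne := fst_ne_snd hfs he
  rw [inl_mem_pathEdge_iff hj, mem_iff_eq_fst_or_eq_snd hfs, endIndex]
  by_cases h : v = fst e
  · subst h; simp [hne]
  · simp [h, and_comm]

lemma inl_mem_liftMatching_iff [DecidableEq V] (hfs : ∀ e : Sym2 V, s(fst e, snd e) = e)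
    (hw : ∀ e ∈ G.edgeSet, 0 < w e) {M : Set (Sym2 V)} (hM : M ⊆ G.edgeSet) {v : V}
    {x : Sym2 (V ⊕ (Sym2 V × ℕ))} :
    x ∈ liftMatching G w fst snd M ∧ inl v ∈ x ↔
      x ∈ (fun e => pathEdge w fst snd e (endIndex w fst v e)) '' {e | e ∈ M ∧ v ∈ e} := by
  constructor
  · rintro ⟨⟨e, he, j, hj, hpar, rfl⟩, hv⟩
    obtain ⟨hve, rfl⟩ := (inl_mem_pathEdge_iff_eq_endIndex hfs he hj).1 hv
    exact ⟨e, ⟨hpar.1 (even_endIndex v e), hve⟩, rfl⟩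
  · rintro ⟨e, ⟨heM, hve⟩, rfl⟩
    have he := hM heM
    have hlt := endIndex_lt (fst := fst) v (hw e he)
    exact ⟨⟨e, he, _, hlt, iff_of_true (even_endIndex v e) heM, rfl⟩,
      (inl_mem_pathEdge_iff_eq_endIndex hfs he hlt).2 ⟨hve, rfl⟩⟩

lemma existsUnique_inl_mem_liftMatching_iff [DecidableEq V]
    (hfs : ∀ e : Sym2 V, s(fst e, snd e) = e) (hw : ∀ e ∈ G.edgeSet, 0 < w e)
    {M : Set (Sym2 V)} (hM : M ⊆ G.edgeSet) (v : V) :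
    (∃! x, x ∈ liftMatching G w fst snd M ∧ inl v ∈ x) ↔ ∃! e, e ∈ M ∧ v ∈ e := by
  simp_rw [inl_mem_liftMatching_iff hfs hw hM]
  refine Set.InjOn.existsUnique_mem_image_iff fun e he e' he' h => ?_
  exact ((pathEdge_inj hfs (fst_ne_snd hfs (hM he.1)) (endIndex_lt v (hw e (hM he.1)))
    (endIndex_lt v (hw e' (hM he'.1)))).1 h).1

lemma isPMOn_iff_of_coe_eq_liftMatching [DecidableEq V]
    (hfs : ∀ e : Sym2 V, s(fst e, snd e) = e) (hw : ∀ e ∈ G.edgeSet, 0 < w e)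
    {M : Finset (Sym2 V)} {M' : Finset (Sym2 (V ⊕ (Sym2 V × ℕ)))} (hM : ↑M ⊆ G.edgeSet)
    (hM' : ↑M' = liftMatching G w fst snd ↑M) :
    IsPMOn (SimpleGraph.fromRel (rel G w fst snd)) (valid G w) M' ↔
      IsPMOn G (fun _ => True) M := by
  have hmem (x) : x ∈ M' ↔ x ∈ liftMatching G w fst snd ↑M := by rw [← Finset.mem_coe, hM']
  simp only [IsPMOn, hM', hmem, Sum.forall, forall_const, hM, true_and]
  refine ⟨fun h v => (existsUnique_inl_mem_liftMatching_iff hfs hw hM v).1 (h.2.1 v trivial),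
    fun h => ⟨liftMatching_subset_edgeSet hfs _,
      fun v _ => (existsUnique_inl_mem_liftMatching_iff hfs hw hM v).2 (h v), ?_⟩⟩
  rintro ⟨e, i⟩ hv
  obtain ⟨he, hi⟩ := valid_inr_iff.1 hv
  exact existsUnique_inr_mem_liftMatching _ he hi

section Alternation

variable (hfs : ∀ e : Sym2 V, s(fst e, snd e) = e) {M' : Finset (Sym2 (V ⊕ (Sym2 V × ℕ)))}
  (hM' : IsPMOn (SimpleGraph.fromRel (rel G w fst snd)) (valid G w) M')
include hfs hM'

lemma pathEdge_mem_iff_notMem_succ {e : Sym2 V} {j : ℕ} (he : e ∈ G.edgeSet)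
    (hj : j + 1 < 2 * w e - 1) :
    pathEdge w fst snd e j ∈ M' ↔ pathEdge w fst snd e (j + 1) ∉ M' := by
  have hne : pathEdge w fst snd e j ≠ pathEdge w fst snd e (j + 1) := fun h => by
    have := ((pathEdge_inj hfs (fst_ne_snd hfs he) (by omega) hj).1 h).2
    omega
  -- the internal vertex `(e, j)` lies on the path edges `j` and `j + 1`, and on no other edge
  refine mem_iff_notMem_of_existsUnique_mem (hM'.2 _ (valid_inr_iff.2 ⟨he, hj⟩))
    (inr_mem_pathEdge_iff.2 ⟨rfl, Or.inl rfl, by omega⟩)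
    (inr_mem_pathEdge_iff.2 ⟨rfl, Or.inr rfl, by omega⟩) hne fun z hz hu => ?_
  obtain ⟨e', -, j', -, rfl⟩ := (mem_edgeSet_fromRel_rel_iff hfs).1 (hM'.1 hz)
  obtain ⟨rfl, rfl | rfl, -⟩ := inr_mem_pathEdge_iff.1 hu
  exacts [Or.inl rfl, Or.inr rfl]

lemma pathEdge_mem_iff_even_iff {e : Sym2 V} {j : ℕ} (he : e ∈ G.edgeSet)
    (hj : j < 2 * w e - 1) :
    pathEdge w fst snd e j ∈ M' ↔ (Even j ↔ pathEdge w fst snd e 0 ∈ M') := by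
  induction j with
  | zero => simp
  | succ j ih =>
    have := pathEdge_mem_iff_notMem_succ hfs hM' he hj
    have := ih (by omega)
    rw [Nat.even_add_one]
    tauto

lemma coe_eq_liftMatching :
    ↑M' = liftMatching G w fst snd {e | e ∈ G.edgeSet ∧ pathEdge w fst snd e 0 ∈ M'} := by
  ext x
  constructor
  · intro hx
    obtain ⟨e, he, j, hj, rfl⟩ := (mem_edgeSet_fromRel_rel_iff hfs).1 (hM'.1 hx)
    refine ⟨e, he, j, hj, ?_, rfl⟩
    simpa [he] using (pathEdge_mem_iff_even_iff hfs hM' he hj).1 hx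
  · rintro ⟨e, he, j, hj, hpar, rfl⟩
    exact (pathEdge_mem_iff_even_iff hfs hM' he hj).2 (by simpa [he] using hpar)

end Alternation

lemma mem_red_iff {x : Sym2 (V ⊕ (Sym2 V × ℕ))} :
    x ∈ red G w fst snd ↔ ∃ e ∈ G.edgeSet, ∃ k < w e, x = pathEdge w fst snd e (2 * k) := by
  refine exists_congr fun e => and_congr_right fun _ => ⟨?_, ?_⟩
  · rintro (⟨h1, rfl⟩ | ⟨h2, rfl⟩ | ⟨h2, rfl⟩ | ⟨i, hi, hile, rfl⟩)
    · exact ⟨0, by omega, (pathEdge_zero_of_eq_one h1).symm⟩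
    · exact ⟨0, by omega, (pathEdge_zero h2).symm⟩
    · exact ⟨w e - 1, by omega, by rw [show 2 * (w e - 1) = 2 * w e - 2 by omega, pathEdge_last h2]⟩
    · refine ⟨(i + 1) / 2, by omega, ?_⟩
      rw [show 2 * ((i + 1) / 2) = i + 1 by omega, pathEdge_of_pos (by omega) (by omega)]
      rfl
  · rintro ⟨k, hk, rfl⟩
    obtain rfl | hk0 := Nat.eq_zero_or_pos k
    · obtain h1 | h2 := (show 1 ≤ w e from hk).eq_or_lt
      · exact Or.inl ⟨h1.symm, pathEdge_zero_of_eq_one h1.symm⟩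
      · exact Or.inr (Or.inl ⟨h2, pathEdge_zero h2⟩)
    obtain hk1 | hk1 := (show k + 1 ≤ w e from hk).eq_or_lt
    · refine Or.inr (Or.inr (Or.inl ⟨by omega, ?_⟩))
      rw [show 2 * k = 2 * w e - 2 by omega, pathEdge_last (by omega)]
    · refine Or.inr (Or.inr (Or.inr ⟨2 * k - 1, by omega, by omega, ?_⟩))
      rw [pathEdge_of_pos (by omega) (by omega), show 2 * k - 1 + 1 = 2 * k by omega]

lemma liftMatching_inter_red [DecidableEq V] (hfs : ∀ e : Sym2 V, s(fst e, snd e) = e)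
    {M : Finset (Sym2 V)} (hM : ↑M ⊆ G.edgeSet) :
    liftMatching G w fst snd ↑M ∩ red G w fst snd =
      ↑((M.sigma fun e => Finset.range (w e)).image fun p => pathEdge w fst snd p.1 (2 * p.2)) := by
  ext x
  simp only [Set.mem_inter_iff, mem_red_iff, Finset.coe_image, Set.mem_image,
    Finset.mem_coe, Finset.mem_sigma, Finset.mem_range, Sigma.exists]
  constructor
  · rintro ⟨⟨e, he, j, hj, hpar, rfl⟩, e', -, k, hk, h⟩
    obtain ⟨rfl, rfl⟩ := (pathEdge_inj hfs (fst_ne_snd hfs he) hj (by omega)).1 h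
    exact ⟨e, k, ⟨hpar.1 (even_two_mul k), hk⟩, rfl⟩
  · rintro ⟨e, k, ⟨heM, hk⟩, rfl⟩
    exact ⟨⟨e, hM heM, 2 * k, by omega, iff_of_true (even_two_mul k) heM, rfl⟩,
      e, hM heM, k, hk, rfl⟩

lemma ncard_liftMatching_inter_red [DecidableEq V] (hfs : ∀ e : Sym2 V, s(fst e, snd e) = e)
    {M : Finset (Sym2 V)} (hM : ↑M ⊆ G.edgeSet) :
    (liftMatching G w fst snd ↑M ∩ red G w fst snd).ncard = ∑ e ∈ M, w e := by
  rw [liftMatching_inter_red hfs hM, Set.ncard_coe_finset, Finset.card_image_of_injOn,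
    Finset.card_sigma]
  · simp
  rintro ⟨e, k⟩ hp ⟨e', k'⟩ hp' h
  simp only [Finset.coe_sigma, Set.mem_sigma_iff, Finset.mem_coe, Finset.mem_range] at hp hp'
  dsimp only at h
  have he := hM hp.1
  obtain ⟨rfl, hk⟩ := (pathEdge_inj hfs (fst_ne_snd hfs he) (by omega) (by omega)).1 h
  obtain rfl : k = k' := by omega
  rfl

lemma finite_of_isPMOn [DecidableEq V] {M : Finset (Sym2 V)} (hM : IsPMOn G (fun _ => True) M) :
    Finite V :=
  Set.finite_univ_iff.1 <| (M.biUnion Sym2.toFinset).finite_toSet.subset fun v _ => by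
    obtain ⟨e, ⟨he, hv⟩, -⟩ := hM.2 v trivial
    exact Finset.mem_biUnion.2 ⟨e, he, Sym2.mem_toFinset.2 hv⟩

lemma finite_liftMatching (hE : G.edgeSet.Finite) (M : Set (Sym2 V)) :
    (liftMatching G w fst snd M).Finite :=
  (hE.biUnion fun e _ => (Set.finite_Iio (2 * w e - 1)).image (pathEdge w fst snd e)).subset
    fun _ ⟨_, he, j, hj, _, hx⟩ => Set.mem_biUnion he ⟨j, hj, hx.symm⟩

lemma finite_setOf_pathEdge_zero_mem (hfs : ∀ e : Sym2 V, s(fst e, snd e) = e)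
    (hw : ∀ e ∈ G.edgeSet, 0 < w e) (M' : Finset (Sym2 (V ⊕ (Sym2 V × ℕ)))) :
    {e | e ∈ G.edgeSet ∧ pathEdge w fst snd e 0 ∈ M'}.Finite :=
  Set.Finite.of_finite_image (M'.finite_toSet.subset (by rintro _ ⟨e, ⟨-, h⟩, rfl⟩; exact h))
    fun e he e' he' h => ((pathEdge_inj hfs (fst_ne_snd hfs he.1)
      (by have := hw e he.1; omega) (by have := hw e' he'.1; omega)).1 h).1

end Subdivide

open Subdivide in
/-- Reduction EWPM ≤ EM (Gurjar et al.): replacing each edge `e` (of positive weight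
`w e`) by a red/blue alternating path of length `2·w(e) − 1` starting and ending with
red, the graph `G` has a perfect matching of total weight exactly `W` iff the subdivided
graph has a perfect matching with exactly `W` red edges. -/
theorem stmt_15 {V : Type*} [DecidableEq V] (G : SimpleGraph V)
    (w : Sym2 V → ℕ) (hw : ∀ e ∈ G.edgeSet, 1 ≤ w e)
    (fst snd : Sym2 V → V) (hfs : ∀ e : Sym2 V, s(fst e, snd e) = e)
    (W : ℕ) :
    (∃ M : Finset (Sym2 V), IsPMOn G (fun _ => True) M ∧ ∑ e ∈ M, w e = W) ↔
    (∃ M' : Finset (Sym2 (V ⊕ (Sym2 V × ℕ))),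
      IsPMOn (SimpleGraph.fromRel (rel G w fst snd)) (valid G w) M' ∧
      ((M' : Set (Sym2 (V ⊕ (Sym2 V × ℕ)))) ∩ red G w fst snd).ncard = W) := by
  constructor
  · rintro ⟨M, hM, rfl⟩
    have := finite_of_isPMOn hM
    have hM' := (finite_liftMatching (w := w) (fst := fst) (snd := snd) G.edgeSet.toFinite
      ↑M).coe_toFinset
    exact ⟨_, (isPMOn_iff_of_coe_eq_liftMatching hfs hw hM.1 hM').2 hM,
      by rw [hM', ncard_liftMatching_inter_red hfs hM.1]⟩
  · rintro ⟨M', hM', rfl⟩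
    have hfin := finite_setOf_pathEdge_zero_mem hfs hw M'
    have hsub : ↑hfin.toFinset ⊆ G.edgeSet := by
      rw [hfin.coe_toFinset]; exact fun e he => he.1
    have hlift : ↑M' = liftMatching G w fst snd ↑hfin.toFinset := by
      rw [hfin.coe_toFinset]; exact coe_eq_liftMatching hfs hM'
    exact ⟨_, (isPMOn_iff_of_coe_eq_liftMatching hfs hw hsub hlift).1 hM',
      by rw [hlift, ncard_liftMatching_inter_red hfs hsub]⟩
end
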